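/- arXiv:2511.00616 — 9 statements merged into one kernel-verified Lean document; each statement's English description precedes it below -/
import Mathlib

section
/- Let G be a finite simple graph on at least 2 vertices such that every pair of distinct nonadjacent vertices x, y satisfies d(x) + d(y) ≥ 2·ᾱ(G) − 1. Then either G contains a triangle, or G is isomorphic to the balanced complete bipartite graph K_{m,m} for some positive integer m. -/
/-!
Write `a = ᾱ(G)` and fix `s + t = a + 1` such that `G` has no `(s,t)`-bipartite-hole. An
independent set of size `a + 1` would contain such a hole, so independent sets have at most `a`
vertices; if `G` is triangle-free, neighbourhoods are independent and `Δ(G) ≤ a`, and the degree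
condition then produces a vertex `x` of degree exactly `a`. Put `A = N(x)`. A vertex `v ∉ A`
misses fewer than `min(s,t)` vertices of `A`, since otherwise those vertices together with `v` and
the rest of `A` would form an `(s,t)`- or `(t,s)`-hole; so any two vertices outside `A` have a
common neighbour in `A` and, `G` being triangle-free, are not adjacent. Hence `G` is bipartite
with both sides independent of size at most `a`, and the degree condition forces every edge
between the sides and `|V \ A| = a`.
-/

namespace SimpleGraph

variable {V : Type*}

/-- `G` has an `(s,t)`-bipartite-hole. -/
def HasBipHole (G : SimpleGraph V) (s t : ℕ) : Prop :=
  ∃ S T : Finset V, Disjoint S T ∧ S.card = s ∧ T.card = t ∧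
    ∀ a ∈ S, ∀ b ∈ T, ¬ G.Adj a b

/-- The bipartite-hole-number `ᾱ(G)`. -/
noncomputable def bipHoleNum (G : SimpleGraph V) : ℕ :=
  sInf {k | 0 < k ∧ ∃ s t : ℕ, 0 < s ∧ 0 < t ∧ s + t = k + 1 ∧ ¬ G.HasBipHole s t}

end SimpleGraph

open Finset

namespace SimpleGraph

variable {V : Type*} {G : SimpleGraph V} {s t : ℕ}

lemma HasBipHole.symm (h : G.HasBipHole s t) : G.HasBipHole t s := by
  obtain ⟨S, T, hST, hS, hT, hno⟩ := h
  exact ⟨T, S, hST.symm, hT, hS, fun b hb a ha hab => hno a ha b hb hab.symm⟩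

lemma hasBipHole_one_one_iff : G.HasBipHole 1 1 ↔ ∃ x y, x ≠ y ∧ ¬ G.Adj x y := by
  simp [HasBipHole, card_eq_one, adj_comm]

lemma not_hasBipHole_of_card_lt [Fintype V] (h : Fintype.card V < s + t) :
    ¬ G.HasBipHole s t := by
  classical
  rintro ⟨S, T, hST, rfl, rfl, -⟩
  have := card_union_of_disjoint hST ▸ card_le_univ (S ∪ T)
  omega

lemma IsIndepSet.hasBipHole [DecidableEq V] {I : Finset V} (hI : G.IsIndepSet I)
    (hst : s + t ≤ #I) : G.HasBipHole s t := by
  obtain ⟨S, hSI, rfl⟩ := exists_subset_card_eq (show s ≤ #I by omega)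
  obtain ⟨T, hTI, rfl⟩ :=
    exists_subset_card_eq (show t ≤ #(I \ S) by rw [card_sdiff_of_subset hSI]; omega)
  refine ⟨S, T, disjoint_sdiff.mono_right hTI, rfl, rfl, fun a ha b hb hab => ?_⟩
  exact hI (hSI ha) (sdiff_subset (hTI hb)) hab.ne hab

lemma bipHoleNum_succ_le (hs : 0 < s) (ht : 0 < t) (h : ¬ G.HasBipHole s t) :
    G.bipHoleNum + 1 ≤ s + t := by
  have : G.bipHoleNum ≤ s + t - 1 := Nat.sInf_le ⟨by omega, s, t, hs, ht, by omega, h⟩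
  omega

section Finite

variable [Fintype V]

lemma bipHoleNum_spec :
    0 < G.bipHoleNum ∧
      ∃ s t : ℕ, 0 < s ∧ 0 < t ∧ s + t = G.bipHoleNum + 1 ∧ ¬ G.HasBipHole s t := by
  exact Nat.sInf_mem (s := {k | 0 < k ∧ ∃ s t : ℕ, 0 < s ∧ 0 < t ∧ s + t = k + 1 ∧
    ¬ G.HasBipHole s t}) ⟨Fintype.card V + 1, by omega, 1, Fintype.card V + 1, one_pos, by omega,
    by omega, not_hasBipHole_of_card_lt (by omega)⟩

lemma isIndepSet_neighborFinset [DecidableRel G.Adj] (h : G.CliqueFree 3) (v : V) :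
    G.IsIndepSet (G.neighborFinset v : Set V) := by
  simpa using isIndepSet_neighborSet_of_triangleFree _ h v

lemma degree_lt_card_of_neighborFinset_subset [DecidableRel G.Adj] {J : Finset V} {v w : V}
    (hJ : G.neighborFinset v ⊆ J) (hw : w ∈ J) (hvw : ¬ G.Adj v w) : G.degree v < #J := by
  rw [← card_neighborFinset_eq_degree]
  exact card_lt_card ((ssubset_iff_of_subset hJ).mpr ⟨w, hw, by simpa using hvw⟩)

variable [DecidableEq V]

lemma IsIndepSet.card_le_bipHoleNum {I : Finset V} (hI : G.IsIndepSet I) :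
    #I ≤ G.bipHoleNum := by
  obtain ⟨-, s, t, -, -, hst, h⟩ := G.bipHoleNum_spec
  by_contra! hlt
  exact h (hI.hasBipHole (by omega))

lemma nonempty_iso_completeBipartiteGraph {A : Finset V} {m : ℕ} (hA : G.IsIndepSet A)
    (hB : G.IsIndepSet (Aᶜ : Finset V)) (hAB : ∀ u ∈ A, ∀ v ∉ A, G.Adj u v)
    (hAcard : #A = m) (hBcard : #Aᶜ = m) :
    Nonempty (G ≃g completeBipartiteGraph (Fin m) (Fin m)) := by
  let e : G ≃g completeBipartiteGraph {x // x ∈ A} {x // x ∉ A} :=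
    { toEquiv := (Equiv.sumCompl (· ∈ A)).symm
      map_rel_iff' := fun {u v} => by
        by_cases hu : u ∈ A <;> by_cases hv : v ∈ A <;>
          simp only [hu, hv, Equiv.sumCompl_symm_apply_of_pos, Equiv.sumCompl_symm_apply_of_neg,
            not_false_eq_true, completeBipartiteGraph_adj, Sum.isLeft_inl, Sum.isRight_inl,
            Sum.isLeft_inr, Sum.isRight_inr, Bool.false_eq_true, and_false, and_true, and_self,
            or_self, or_false, or_true, false_iff, true_iff]
        · exact fun h => hA hu hv h.ne h
        · exact hAB u hu v hv
        · exact (hAB v hv u hu).symm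
        · exact fun h => hB (by simpa using hu) (by simpa using hv) h.ne h }
  exact ⟨e.trans (completeBipartiteGraphCongr
    (Fintype.equivFinOfCardEq (by simpa using hAcard))
    (Fintype.equivFinOfCardEq (by simpa [← card_compl] using hBcard)))⟩

variable [DecidableRel G.Adj]

lemma IsIndepSet.neighborFinset_subset_compl {I : Finset V} (hI : G.IsIndepSet I) {v : V}
    (hv : v ∈ I) : G.neighborFinset v ⊆ Iᶜ :=
  fun _ hw => mem_compl.mpr fun hwI =>
    hI hv hwI ((mem_neighborFinset ..).mp hw).ne ((mem_neighborFinset ..).mp hw)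

lemma degree_le_bipHoleNum (h : G.CliqueFree 3) (v : V) : G.degree v ≤ G.bipHoleNum := by
  rw [← card_neighborFinset_eq_degree]
  exact (isIndepSet_neighborFinset h v).card_le_bipHoleNum

lemma exists_degree_eq_bipHoleNum (hcard : 2 ≤ Fintype.card V) (h : G.CliqueFree 3)
    (hdeg : ∀ x y : V, x ≠ y → ¬ G.Adj x y →
      2 * G.bipHoleNum - 1 ≤ G.degree x + G.degree y) :
    ∃ x, G.degree x = G.bipHoleNum := by
  have hle := degree_le_bipHoleNum h
  by_cases hhole : G.HasBipHole 1 1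
  · obtain ⟨x, y, hxy, hnadj⟩ := hasBipHole_one_one_iff.mp hhole
    have := hdeg x y hxy hnadj
    have := hle x
    have := hle y
    by_cases hx : G.degree x = G.bipHoleNum
    · exact ⟨x, hx⟩
    · exact ⟨y, by omega⟩
  · -- `G` is complete, so `ᾱ(G) = 1`
    have hle1 := bipHoleNum_succ_le one_pos one_pos hhole
    obtain ⟨x⟩ : Nonempty V := Fintype.card_pos_iff.mp (by omega)
    obtain ⟨y, hyx⟩ := Fintype.exists_ne_of_one_lt_card hcard x
    have hxy : G.Adj x y := by
      by_contra hxy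
      exact hhole (hasBipHole_one_one_iff.mpr ⟨x, y, hyx.symm, hxy⟩)
    have := (G.degree_pos_iff_exists_adj x).mpr ⟨y, hxy⟩
    exact ⟨x, le_antisymm (hle x) (by omega)⟩

/-- If `v` missed `s` vertices of `I`, these and `v` together with the rest of `I` would form an
`(s,t)`-hole. -/
lemma IsIndepSet.le_card_inter_neighborFinset {I : Finset V} (hI : G.IsIndepSet I) {v : V}
    (hv : v ∉ I) (h : ¬ G.HasBipHole s t) (hst : s + t = #I + 1) :
    t ≤ #(I ∩ G.neighborFinset v) := by
  by_contra! hlt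
  have hs : s ≤ #(I \ G.neighborFinset v) := by
    have := card_sdiff_add_card_inter I (G.neighborFinset v)
    omega
  obtain ⟨S, hS, rfl⟩ := exists_subset_card_eq hs
  have hSI : S ⊆ I := hS.trans sdiff_subset
  refine h ⟨S, insert v (I \ S), ?_, rfl, ?_, fun a ha b hb hab => ?_⟩
  · exact disjoint_insert_right.mpr ⟨fun hvS => hv (hSI hvS), disjoint_sdiff⟩
  · rw [card_insert_of_notMem fun hvI => hv (sdiff_subset hvI), card_sdiff_of_subset hSI]
    omega
  · obtain rfl | hb := mem_insert.mp hb
    · exact (mem_sdiff.mp (hS ha)).2 ((mem_neighborFinset ..).mpr hab.symm)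
    · exact hI (hSI ha) (sdiff_subset hb) hab.ne hab

/-- Two vertices outside `I` see more than `|I|` vertices of `I` in total, hence have a common
neighbour. -/
lemma IsIndepSet.isIndepSet_compl (h : G.CliqueFree 3) {I : Finset V} (hI : G.IsIndepSet I)
    (hcard : #I = G.bipHoleNum) : G.IsIndepSet (Iᶜ : Finset V) := by
  obtain ⟨-, s, t, -, -, hst, hhole⟩ := G.bipHoleNum_spec
  intro u hu w hw _ huw
  have hsu := hI.le_card_inter_neighborFinset (by simpa using hu) (fun h => hhole h.symm)
    (by omega)
  have htw := hI.le_card_inter_neighborFinset (by simpa using hw) hhole (by omega)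
  obtain ⟨x, hx⟩ :=
    inter_nonempty_of_card_lt_card_add_card (t := I ∩ G.neighborFinset u)
      (u := I ∩ G.neighborFinset w) inter_subset_left inter_subset_left (by omega)
  simp only [mem_inter, mem_neighborFinset] at hx
  exact h {u, w, x} (is3Clique_triple_iff.mpr ⟨huw, hx.1.2, hx.2.2⟩)

variable {k : ℕ}

lemma IsIndepSet.le_card_compl {A : Finset V} (hA : G.IsIndepSet A) (hAcard : #A = k)
    (hne : Aᶜ.Nonempty)
    (hdeg : ∀ x y : V, x ≠ y → ¬ G.Adj x y → 2 * k - 1 ≤ G.degree x + G.degree y) :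
    k ≤ #Aᶜ := by
  by_contra! hlt
  obtain ⟨u, hu, w, hw, huw⟩ := one_lt_card.mp (show 1 < #A by have := hne.card_pos; omega)
  have hdu := card_le_card (hA.neighborFinset_subset_compl hu)
  have hdw := card_le_card (hA.neighborFinset_subset_compl hw)
  rw [card_neighborFinset_eq_degree] at hdu hdw
  have := hdeg u w huw fun huw' => hA hu hw huw huw'
  omega

lemma IsIndepSet.adj_of_mem_of_notMem {A : Finset V} (hA : G.IsIndepSet A)
    (hB : G.IsIndepSet (Aᶜ : Finset V)) (hAcard : #A ≤ k) (hBcard : #Aᶜ ≤ k)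
    (hdeg : ∀ x y : V, x ≠ y → ¬ G.Adj x y → 2 * k - 1 ≤ G.degree x + G.degree y)
    {u v : V} (hu : u ∈ A) (hv : v ∉ A) : G.Adj u v := by
  by_contra huv
  have hdu := degree_lt_card_of_neighborFinset_subset (hA.neighborFinset_subset_compl hu)
    (mem_compl.mpr hv) huv
  have hdv := degree_lt_card_of_neighborFinset_subset
    (compl_compl A ▸ hB.neighborFinset_subset_compl (mem_compl.mpr hv)) hu (huv ∘ Adj.symm)
  have := hdeg u v (fun h => hv (h ▸ hu)) huv
  omega

end Finite

end SimpleGraph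

open SimpleGraph

/-- If `G` has at least 2 vertices and every pair of distinct nonadjacent
vertices `x, y` satisfies `d(x) + d(y) ≥ 2ᾱ(G) - 1`, then `G` contains a triangle or `G` is
isomorphic to a balanced complete bipartite graph `K_{m,m}` for some `m ≥ 1`. -/
theorem stmt3 {V : Type*} [Fintype V] [DecidableEq V] (G : SimpleGraph V) [DecidableRel G.Adj]
    (hcard : 2 ≤ Fintype.card V)
    (hdeg : ∀ x y : V, x ≠ y → ¬ G.Adj x y →
      2 * G.bipHoleNum - 1 ≤ G.degree x + G.degree y) :
    (∃ x y z : V, G.Adj x y ∧ G.Adj y z ∧ G.Adj x z) ∨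
      ∃ m : ℕ, 0 < m ∧ Nonempty (G ≃g completeBipartiteGraph (Fin m) (Fin m)) := by
  by_cases htri : ∃ x y z : V, G.Adj x y ∧ G.Adj y z ∧ G.Adj x z
  · exact Or.inl htri
  right
  have hG : G.CliqueFree 3 := fun s hs => by
    obtain ⟨x, y, z, hxy, hxz, hyz, rfl⟩ := is3Clique_iff.mp hs
    exact htri ⟨x, y, z, hxy, hyz, hxz⟩
  obtain ⟨x, hx⟩ := exists_degree_eq_bipHoleNum hcard hG hdeg
  set A := G.neighborFinset x
  have hA : G.IsIndepSet A := isIndepSet_neighborFinset hG x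
  have hAcard : #A = G.bipHoleNum := (card_neighborFinset_eq_degree G x).trans hx
  have hB : G.IsIndepSet (Aᶜ : Finset V) := hA.isIndepSet_compl hG hAcard
  have hBcard : #Aᶜ = G.bipHoleNum :=
    le_antisymm hB.card_le_bipHoleNum (hA.le_card_compl hAcard ⟨x, by simp [A]⟩ hdeg)
  exact ⟨G.bipHoleNum, G.bipHoleNum_spec.1, nonempty_iso_completeBipartiteGraph hA hB
    (fun u hu v hv => hA.adj_of_mem_of_notMem hB hAcard.le hBcard.le hdeg hu hv) hAcard hBcard⟩
end

section
/- Let G be a finite simple non-complete graph. Then κ(G) + ᾱ(G) ≥ δ(G) + 2, where δ(G) is the minimum degree of G. -/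
namespace SimpleGraph

variable {V : Type*}

/-- The vertex connectivity `κ(G)`: the minimum size of a vertex set `A` whose deletion
leaves a graph that is disconnected or has at most one vertex. -/
noncomputable def vertConn [Fintype V] [DecidableEq V] (G : SimpleGraph V) : ℕ :=
  sInf {k | ∃ A : Finset V, A.card = k ∧
    ((Aᶜ).card ≤ 1 ∨ ¬ (G.induce ((↑A : Set V)ᶜ)).Connected)}

end SimpleGraph

/-!
Take a minimum separating set `A`. If it leaves at most one vertex, then `κ ≥ n - 1 ≥ δ`, and
`ᾱ ≥ 2` because two nonadjacent vertices form a `(1,1)`-bipartite-hole. Otherwise `A` splits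
the remaining vertices into two sides `C`, `D` with no edge between them. A vertex of `C` has all
its neighbours in `A ∪ C`, so `|C| ≥ δ + 1 - κ`, and likewise `|D| ≥ δ + 1 - κ`. Hence `G` has
every `(s,t)`-bipartite-hole with `s, t ≤ δ + 1 - κ`, so positive `s, t` with `s + t = ᾱ + 1`
and no `(s,t)`-bipartite-hole cannot satisfy `s + t ≤ δ + 2 - κ`.
-/

namespace SimpleGraph

open Finset

variable {V : Type*} (G : SimpleGraph V)

theorem HasBipHole.mono {G : SimpleGraph V} {s t s' t' : ℕ} (h : G.HasBipHole s t)
    (hs : s' ≤ s) (ht : t' ≤ t) : G.HasBipHole s' t' := by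
  obtain ⟨S, T, hST, rfl, rfl, hS⟩ := h
  obtain ⟨S', hS', rfl⟩ := exists_subset_card_eq hs
  obtain ⟨T', hT', rfl⟩ := exists_subset_card_eq ht
  exact ⟨S', T', hST.mono hS' hT', rfl, rfl, fun a ha b hb => hS a (hS' ha) b (hT' hb)⟩

theorem hasBipHole_one_one {x y : V} (hxy : x ≠ y) (h : ¬ G.Adj x y) : G.HasBipHole 1 1 :=
  ⟨{x}, {y}, disjoint_singleton.2 hxy, card_singleton x, card_singleton y, by simpa using h⟩

theorem HasBipHole.add_le_card [Fintype V] {G : SimpleGraph V} {s t : ℕ}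
    (h : G.HasBipHole s t) : s + t ≤ Fintype.card V := by
  classical
  obtain ⟨S, T, hST, rfl, rfl, -⟩ := h
  rw [← card_union_of_disjoint hST]
  exact card_le_univ _

theorem exists_not_hasBipHole_add_eq_bipHoleNum_add_one [Fintype V] [Nonempty V] :
    ∃ s t, 0 < s ∧ 0 < t ∧ s + t = G.bipHoleNum + 1 ∧ ¬ G.HasBipHole s t := by
  have hne : {k | 0 < k ∧ ∃ s t : ℕ, 0 < s ∧ 0 < t ∧ s + t = k + 1 ∧ ¬ G.HasBipHole s t}.Nonempty :=
    ⟨Fintype.card V, Fintype.card_pos, Fintype.card V, 1, Fintype.card_pos, one_pos, rfl,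
      fun h => by simpa using h.add_le_card⟩
  exact (Nat.sInf_mem hne).2

theorem exists_card_eq_vertConn [Fintype V] [DecidableEq V] :
    ∃ A : Finset V, A.card = G.vertConn ∧
      ((Aᶜ).card ≤ 1 ∨ ¬ (G.induce ((↑A : Set V)ᶜ)).Connected) :=
  Nat.sInf_mem (s := {k | ∃ A : Finset V, A.card = k ∧
    ((Aᶜ).card ≤ 1 ∨ ¬ (G.induce ((↑A : Set V)ᶜ)).Connected)}) ⟨_, univ, rfl, Or.inl (by simp)⟩

theorem minDegree_add_one_le_card [Fintype V] [DecidableRel G.Adj] {u : V} {B : Finset V}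
    (hu : u ∈ B) (hN : G.neighborFinset u ⊆ B) : G.minDegree + 1 ≤ B.card := by
  classical
  calc G.minDegree + 1 ≤ G.degree u + 1 := by grw [G.minDegree_le_degree u]
    _ = (insert u (G.neighborFinset u)).card := by
      rw [card_insert_of_notMem (G.notMem_neighborFinset_self u), card_neighborFinset_eq_degree]
    _ ≤ B.card := card_le_card (insert_subset hu hN)

theorem hasBipHole_of_separation [Fintype V] [DecidableEq V] [DecidableRel G.Adj]
    {A C : Finset V} (hC : ∀ a ∈ C, ∀ b, G.Adj a b → b ∈ A ∪ C) {u v : V} (hu : u ∈ C)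
    (hv : v ∉ A ∪ C) {s t : ℕ} (hs : s + A.card ≤ G.minDegree + 1)
    (ht : t + A.card ≤ G.minDegree + 1) : G.HasBipHole s t := by
  set D := (A ∪ C)ᶜ
  have hCD : ∀ a ∈ C, ∀ b ∈ D, ¬ G.Adj a b := fun a ha b hb hab => mem_compl.1 hb (hC a ha b hab)
  have hCcard : G.minDegree + 1 ≤ A.card + C.card :=
    (G.minDegree_add_one_le_card (mem_union_right A hu)
      fun b hb => hC u hu b ((G.mem_neighborFinset u b).1 hb)).trans (card_union_le A C)
  have hDcard : G.minDegree + 1 ≤ A.card + D.card := by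
    refine (G.minDegree_add_one_le_card (B := A ∪ D) (mem_union_right A (mem_compl.2 hv))
      fun b hb => ?_).trans (card_union_le A D)
    have hvb := (G.mem_neighborFinset v b).1 hb
    by_cases hbA : b ∈ A
    · exact mem_union_left D hbA
    · refine mem_union_right A (mem_compl.2 fun hbAC => hv ?_)
      exact hC b ((mem_union.1 hbAC).resolve_left hbA) v hvb.symm
  have hole : G.HasBipHole C.card D.card :=
    ⟨C, D, disjoint_compl_right.mono_left subset_union_right, rfl, rfl, hCD⟩
  exact hole.mono (by omega) (by omega)

theorem hasBipHole_of_not_preconnected_induce_compl [Fintype V] [DecidableEq V]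
    [DecidableRel G.Adj] {A : Finset V} (hA : ¬ (G.induce ((↑A : Set V)ᶜ)).Preconnected)
    {s t : ℕ} (hs : s + A.card ≤ G.minDegree + 1) (ht : t + A.card ≤ G.minDegree + 1) :
    G.HasBipHole s t := by
  set H := G.induce ((↑A : Set V)ᶜ)
  obtain ⟨u, v, huv⟩ : ∃ u v, ¬ H.Reachable u v := by simpa [Preconnected] using hA
  let C : Finset V := univ.filter fun w => ∃ hw : w ∉ A, H.Reachable u ⟨w, hw⟩
  have hC : ∀ a ∈ C, ∀ b, G.Adj a b → b ∈ A ∪ C := by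
    intro a ha b hab
    obtain ⟨ha, hua⟩ := (mem_filter.1 ha).2
    by_cases hb : b ∈ A
    · exact mem_union_left C hb
    · exact mem_union_right A <| mem_filter.2
        ⟨mem_univ b, hb, hua.trans (show H.Adj ⟨a, ha⟩ ⟨b, hb⟩ from hab).reachable⟩
  have huC : ↑u ∈ C := mem_filter.2 ⟨mem_univ _, u.2, Reachable.refl u⟩
  have hvAC : ↑v ∉ A ∪ C := by
    simp only [mem_union, not_or]
    exact ⟨v.2, fun hvC => huv (mem_filter.1 hvC).2.2⟩
  exact G.hasBipHole_of_separation hC huC hvAC hs ht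

end SimpleGraph

theorem stmt4_general {V : Type*} [Fintype V] [DecidableEq V]
    (G : SimpleGraph V) [DecidableRel G.Adj]
    (hnc : ∃ x y : V, x ≠ y ∧ ¬ G.Adj x y) :
    G.minDegree + 2 ≤ G.vertConn + G.bipHoleNum := by
  obtain ⟨x, y, hxy, hxy_nadj⟩ := hnc
  have : Nonempty V := ⟨x⟩
  obtain ⟨A, hA, hAsep⟩ := G.exists_card_eq_vertConn
  obtain ⟨s, t, hs, ht, hst, hno⟩ := G.exists_not_hasBipHole_add_eq_bipHoleNum_add_one
  by_contra! hlt
  apply hno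
  by_cases hsmall : (Aᶜ).card ≤ 1
  · have hδ : G.minDegree < Fintype.card V :=
      (G.minDegree_le_degree x).trans_lt (G.degree_lt_card_verts x)
    have hcompl := A.card_add_card_compl
    obtain ⟨rfl, rfl⟩ : s = 1 ∧ t = 1 := by omega
    exact G.hasBipHole_one_one hxy hxy_nadj
  · obtain ⟨w, hw⟩ : (Aᶜ).Nonempty := Finset.card_pos.1 (by omega)
    have : Nonempty ((↑A : Set V)ᶜ : Set V) := ⟨⟨w, by simpa using hw⟩⟩
    have hpre : ¬ (G.induce ((↑A : Set V)ᶜ)).Preconnected := fun hp =>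
      hAsep.resolve_left hsmall ⟨hp⟩
    exact G.hasBipHole_of_not_preconnected_induce_compl hpre (by omega) (by omega)

/-- For every non-complete graph `G`, `κ(G) + ᾱ(G) ≥ δ(G) + 2`. -/
theorem stmt4 {V : Type*} [Fintype V] [DecidableEq V] [Nonempty V]
    (G : SimpleGraph V) [DecidableRel G.Adj]
    (hnc : ∃ x y : V, x ≠ y ∧ ¬ G.Adj x y) :
    G.minDegree + 2 ≤ G.vertConn + G.bipHoleNum :=
  stmt4_general G hnc
end

section
/- Let G be a finite simple graph on n ≥ 1 vertices with minimum degree δ. Then ᾱ(G) = n − max over integers s with 1 ≤ s ≤ n of (min over vertex sets S with |S| = s of |N(S)|), and moreover this maximum is attained within the range 1 ≤ s ≤ n − δ, i.e., ᾱ(G) = n − max over integers s with 1 ≤ s ≤ n − δ of (min over vertex sets S with |S| = s of |N(S)|). -/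
/-!
An `(s,t)`-bipartite-hole with `|S| = s` exists exactly when at least `t` vertices lie outside
`S ∪ N(S)`. Hence, writing `μ(s)` for the minimum of `|N(S)|` over `|S| = s`, there is no
`(s,t)`-hole iff `s + μ(s) + t > n`, so the least `s + t - 1` without a hole is
`n - max_s μ(s)`. For `s > n - δ` we have `μ(s) ≤ n - s < δ = μ(1)`, so such `s` never attain
the maximum.
-/

namespace SimpleGraph

variable {V : Type*}

/-- The external neighborhood `N(S)` of a vertex set `S`: the vertices outside `S`
having a neighbor in `S`. -/
def extNbhd [Fintype V] [DecidableEq V] (G : SimpleGraph V) [DecidableRel G.Adj]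
    (S : Finset V) : Finset V :=
  Finset.univ.filter fun v => v ∉ S ∧ ∃ u ∈ S, G.Adj u v

end SimpleGraph

namespace SimpleGraph

variable {V : Type*} [Fintype V] [DecidableEq V] (G : SimpleGraph V) [DecidableRel G.Adj]

theorem mem_extNbhd {S : Finset V} {v : V} :
    v ∈ G.extNbhd S ↔ v ∉ S ∧ ∃ u ∈ S, G.Adj u v := by
  simp [extNbhd]

theorem disjoint_extNbhd (S : Finset V) : Disjoint S (G.extNbhd S) :=
  Finset.disjoint_left.2 fun _ hv h => (G.mem_extNbhd.1 h).1 hv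

theorem card_add_card_extNbhd_le (S : Finset V) :
    S.card + (G.extNbhd S).card ≤ Fintype.card V := by
  rw [← Finset.card_union_of_disjoint (G.disjoint_extNbhd S)]
  exact Finset.card_le_univ _

theorem extNbhd_singleton (v : V) : G.extNbhd {v} = G.neighborFinset v := by
  ext w
  simp only [mem_extNbhd, Finset.mem_singleton, exists_eq_left, mem_neighborFinset,
    and_iff_right_iff_imp]
  exact fun h hw => G.loopless.irrefl v (hw ▸ h)

theorem hasBipHole_iff_exists_card_extNbhd (s t : ℕ) :
    G.HasBipHole s t ↔
      ∃ S : Finset V, S.card = s ∧ s + (G.extNbhd S).card + t ≤ Fintype.card V := by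
  constructor
  · rintro ⟨S, T, hST, rfl, rfl, hT⟩
    refine ⟨S, rfl, ?_⟩
    have hdisj : Disjoint (S ∪ G.extNbhd S) T := by
      refine Finset.disjoint_left.2 fun b hb hbT => ?_
      rcases Finset.mem_union.1 hb with hbS | hbN
      · exact Finset.disjoint_left.1 hST hbS hbT
      · obtain ⟨-, u, hu, huv⟩ := G.mem_extNbhd.1 hbN
        exact hT u hu b hbT huv
    have := Finset.card_le_univ ((S ∪ G.extNbhd S) ∪ T)
    rwa [Finset.card_union_of_disjoint hdisj,
      Finset.card_union_of_disjoint (G.disjoint_extNbhd S)] at this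
  · rintro ⟨S, rfl, hle⟩
    have hcard : t ≤ ((S ∪ G.extNbhd S)ᶜ).card := by
      rw [Finset.card_compl, Finset.card_union_of_disjoint (G.disjoint_extNbhd S)]
      omega
    obtain ⟨T, hT, rfl⟩ := Finset.exists_subset_card_eq hcard
    have hT' : ∀ b ∈ T, b ∉ S ∧ b ∉ G.extNbhd S := fun b hb => by
      simpa using hT hb
    refine ⟨S, T, Finset.disjoint_right.2 fun b hb => (hT' b hb).1, rfl, rfl, ?_⟩
    exact fun a ha b hb hab => (hT' b hb).2 (G.mem_extNbhd.2 ⟨(hT' b hb).1, a, ha, hab⟩)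

/-- The paper's `min_{|S| = s} |N(S)|`; it is `0` when `s > |V|`. -/
noncomputable def minExtNbhdCard (s : ℕ) : ℕ :=
  sInf {c | ∃ S : Finset V, S.card = s ∧ c = (G.extNbhd S).card}

theorem minExtNbhdCard_le_card_extNbhd (S : Finset V) :
    G.minExtNbhdCard S.card ≤ (G.extNbhd S).card :=
  Nat.sInf_le ⟨S, rfl, rfl⟩

theorem exists_card_extNbhd_eq_minExtNbhdCard {s : ℕ} (hs : s ≤ Fintype.card V) :
    ∃ S : Finset V, S.card = s ∧ (G.extNbhd S).card = G.minExtNbhdCard s := by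
  obtain ⟨S, -, hS⟩ := Finset.exists_subset_card_eq (s := Finset.univ) (by simpa using hs)
  obtain ⟨T, hT, hmin⟩ := Nat.sInf_mem (⟨_, S, hS, rfl⟩ :
    {c | ∃ S : Finset V, S.card = s ∧ c = (G.extNbhd S).card}.Nonempty)
  exact ⟨T, hT, hmin.symm⟩

theorem add_minExtNbhdCard_le {s : ℕ} (hs : s ≤ Fintype.card V) :
    s + G.minExtNbhdCard s ≤ Fintype.card V := by
  obtain ⟨S, rfl, hS⟩ := G.exists_card_extNbhd_eq_minExtNbhdCard hs
  exact hS ▸ G.card_add_card_extNbhd_le S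

theorem minExtNbhdCard_one [Nonempty V] : G.minExtNbhdCard 1 = G.minDegree := by
  apply le_antisymm
  · obtain ⟨v, hv⟩ := G.exists_minimal_degree_vertex
    have := G.minExtNbhdCard_le_card_extNbhd {v}
    rwa [Finset.card_singleton, extNbhd_singleton, card_neighborFinset_eq_degree, ← hv] at this
  · obtain ⟨S, hS, hmin⟩ := G.exists_card_extNbhd_eq_minExtNbhdCard Fintype.card_pos
    obtain ⟨v, rfl⟩ := Finset.card_eq_one.1 hS
    rw [← hmin, extNbhd_singleton, card_neighborFinset_eq_degree]
    exact G.minDegree_le_degree v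

theorem hasBipHole_iff_add_minExtNbhdCard_le {s : ℕ} (hs : s ≤ Fintype.card V) (t : ℕ) :
    G.HasBipHole s t ↔ s + G.minExtNbhdCard s + t ≤ Fintype.card V := by
  rw [hasBipHole_iff_exists_card_extNbhd]
  constructor
  · rintro ⟨S, rfl, hle⟩
    have := G.minExtNbhdCard_le_card_extNbhd S
    omega
  · intro hle
    obtain ⟨S, hS, hmin⟩ := G.exists_card_extNbhd_eq_minExtNbhdCard hs
    exact ⟨S, hS, hmin ▸ hle⟩

theorem bipHoleNum_eq_card_sub_of_isGreatest {M : ℕ}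
    (hM : IsGreatest {m | ∃ s, 1 ≤ s ∧ s ≤ Fintype.card V ∧ m = G.minExtNbhdCard s} M) :
    G.bipHoleNum = Fintype.card V - M := by
  obtain ⟨⟨s₀, hs₀, hs₀n, rfl⟩, hmax⟩ := hM
  have hs₀M := G.add_minExtNbhdCard_le hs₀n
  refine IsLeast.csInf_eq
    ⟨⟨by omega, s₀, Fintype.card V - G.minExtNbhdCard s₀ - s₀ + 1, hs₀, by omega, by omega, ?_⟩, ?_⟩
  · rw [G.hasBipHole_iff_add_minExtNbhdCard_le hs₀n]
    omega
  · rintro k ⟨-, s, t, hs, -, hst, hnohole⟩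
    by_cases hsn : s ≤ Fintype.card V
    · rw [G.hasBipHole_iff_add_minExtNbhdCard_le hsn] at hnohole
      have := hmax ⟨s, hs, hsn, rfl⟩
      omega
    · omega

theorem minExtNbhdCard_lt_minDegree {s : ℕ} (hs : Fintype.card V - G.minDegree < s)
    (hsn : s ≤ Fintype.card V) : G.minExtNbhdCard s < G.minDegree := by
  have := G.add_minExtNbhdCard_le hsn
  omega

theorem isGreatest_of_isGreatest_le_card_sub_minDegree [Nonempty V] {M : ℕ}
    (hM : IsGreatest
      {m | ∃ s, 1 ≤ s ∧ s ≤ Fintype.card V - G.minDegree ∧ m = G.minExtNbhdCard s} M) :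
    IsGreatest {m | ∃ s, 1 ≤ s ∧ s ≤ Fintype.card V ∧ m = G.minExtNbhdCard s} M := by
  obtain ⟨⟨s₀, hs₀, hs₀δ, rfl⟩, hmax⟩ := hM
  refine ⟨⟨s₀, hs₀, hs₀δ.trans (Nat.sub_le _ _), rfl⟩, ?_⟩
  rintro _ ⟨s, hs, hsn, rfl⟩
  by_cases hsδ : s ≤ Fintype.card V - G.minDegree
  · exact hmax ⟨s, hs, hsδ, rfl⟩
  · have hδ : G.minDegree ≤ G.minExtNbhdCard s₀ :=
      G.minExtNbhdCard_one ▸ hmax ⟨1, le_rfl, hs₀.trans hs₀δ, rfl⟩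
    exact (G.minExtNbhdCard_lt_minDegree (not_le.1 hsδ) hsn).le.trans hδ

end SimpleGraph

theorem isGreatest_sSup_of_one_le (f : ℕ → ℕ) {N : ℕ} (hN : 1 ≤ N) :
    IsGreatest {m | ∃ s, 1 ≤ s ∧ s ≤ N ∧ m = f s} (sSup {m | ∃ s, 1 ≤ s ∧ s ≤ N ∧ m = f s}) := by
  have hfin : {m | ∃ s, 1 ≤ s ∧ s ≤ N ∧ m = f s}.Finite :=
    ((Set.finite_Iic N).image f).subset fun _ ⟨s, _, hs, hm⟩ => ⟨s, hs, hm.symm⟩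
  exact ⟨Set.Nonempty.csSup_mem ⟨_, 1, le_rfl, hN, rfl⟩ hfin,
    fun _ hm => le_csSup hfin.bddAbove hm⟩

/-- For a graph `G` on `n ≥ 1` vertices with minimum degree `δ`,
`ᾱ(G) = n - max_{1 ≤ s ≤ n} min_{|S| = s} |N(S)|`, and the maximum is attained in the
range `1 ≤ s ≤ n - δ`. -/
theorem stmt5 {V : Type*} [Fintype V] [DecidableEq V] [Nonempty V]
    (G : SimpleGraph V) [DecidableRel G.Adj] :
    G.bipHoleNum = Fintype.card V -
        sSup {m | ∃ s : ℕ, 1 ≤ s ∧ s ≤ Fintype.card V ∧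
          m = sInf {c | ∃ S : Finset V, S.card = s ∧ c = (G.extNbhd S).card}} ∧
    G.bipHoleNum = Fintype.card V -
        sSup {m | ∃ s : ℕ, 1 ≤ s ∧ s ≤ Fintype.card V - G.minDegree ∧
          m = sInf {c | ∃ S : Finset V, S.card = s ∧ c = (G.extNbhd S).card}} := by
  have hδ := G.minDegree_lt_card
  exact ⟨G.bipHoleNum_eq_card_sub_of_isGreatest (isGreatest_sSup_of_one_le _ Fintype.card_pos),
    G.bipHoleNum_eq_card_sub_of_isGreatest <| G.isGreatest_of_isGreatest_le_card_sub_minDegree <|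
      isGreatest_sSup_of_one_le _ (by omega)⟩
end

section
/- Let G be a finite simple graph on n ≥ 1 vertices with ᾱ(G) = n, and let r be the number of connected components of G. Then n ≤ 2^r − 1; equivalently, G has at least ⌈log₂(n + 1)⌉ connected components. -/
namespace SimpleGraph

open Finset

variable {V : Type*} {G : SimpleGraph V}

theorem hasBipHole_of_add_le_bipHoleNum {s t : ℕ} (hs : 0 < s) (ht : 0 < t)
    (hst : s + t ≤ G.bipHoleNum) : G.HasBipHole s t := by
  by_contra hnot
  have : G.bipHoleNum ≤ s + t - 1 := Nat.sInf_le ⟨by omega, s, t, hs, ht, by omega, hnot⟩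
  omega

theorem mem_of_reachable_of_forall_not_adj {S : Set V} (hS : ∀ a ∈ S, ∀ b ∉ S, ¬ G.Adj a b)
    {u v : V} (huv : G.Reachable u v) (hu : u ∈ S) : v ∈ S := by
  by_contra hv
  obtain ⟨p⟩ := huv
  obtain ⟨d, -, hd, hd'⟩ := p.exists_boundary_dart S hu hv
  exact hS _ hd _ hd' d.adj

variable [Fintype V]

open Classical in
theorem HasBipHole.exists_card_preimage_connectedComponentMk_eq {s t : ℕ} (hG : G.HasBipHole s t)
    (hst : s + t = Fintype.card V) :
    ∃ A : Finset G.ConnectedComponent, #{v | G.connectedComponentMk v ∈ A} = s := by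
  obtain ⟨S, T, hdisj, rfl, rfl, hno⟩ := hG
  have hcover : ∀ v, v ∉ S → v ∈ T := by
    have : S ∪ T = univ :=
      eq_univ_of_card _ (by rw [card_union_of_disjoint hdisj, hst])
    intro v hv
    simpa [hv] using this.ge (mem_univ v)
  have hclosed : ∀ a ∈ (S : Set V), ∀ b ∉ (S : Set V), ¬ G.Adj a b :=
    fun a ha b hb => hno a ha b (hcover b hb)
  refine ⟨S.image G.connectedComponentMk, congrArg Finset.card ?_⟩
  ext v
  simp only [mem_filter, mem_univ, true_and, mem_image]
  constructor
  · rintro ⟨u, hu, huv⟩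
    exact mem_of_reachable_of_forall_not_adj hclosed (ConnectedComponent.eq.mp huv) hu
  · exact fun hv => ⟨v, hv, rfl⟩

theorem card_add_one_le_two_pow_card_connectedComponent
    (hG : ∀ s t, 0 < s → 0 < t → s + t = Fintype.card V → G.HasBipHole s t) :
    Fintype.card V + 1 ≤ 2 ^ Nat.card G.ConnectedComponent := by
  classical
  let f : Finset G.ConnectedComponent → ℕ := fun A => #{v | G.connectedComponentMk v ∈ A}
  have hsurj : Set.SurjOn f (univ : Finset (Finset G.ConnectedComponent))
      (range (Fintype.card V + 1)) := by
    intro a ha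
    have ha : a ≤ Fintype.card V := Nat.lt_succ_iff.mp (mem_range.mp ha)
    obtain rfl | hapos := Nat.eq_zero_or_pos a
    · exact ⟨∅, by simp [f]⟩
    obtain rfl | halt := ha.eq_or_lt
    · exact ⟨univ, by simp [f]⟩
    have hhole := hG a (Fintype.card V - a) hapos (by omega) (by omega)
    obtain ⟨A, hA⟩ := hhole.exists_card_preimage_connectedComponentMk_eq (by omega)
    exact ⟨A, mem_coe.mpr (mem_univ A), hA⟩
  simpa [Nat.card_eq_fintype_card] using card_le_card_of_surjOn f hsurj

end SimpleGraph

theorem stmt9_general {V : Type*} [Fintype V] (G : SimpleGraph V)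
    (h : G.bipHoleNum = Fintype.card V) :
    Fintype.card V ≤ 2 ^ (Nat.card G.ConnectedComponent) - 1 ∧
      Nat.clog 2 (Fintype.card V + 1) ≤ Nat.card G.ConnectedComponent := by
  have key := G.card_add_one_le_two_pow_card_connectedComponent
    fun s t hs ht hst => SimpleGraph.hasBipHole_of_add_le_bipHoleNum hs ht (h ▸ hst.le)
  exact ⟨by omega, (Nat.clog_le_iff_le_pow one_lt_two).mpr key⟩

/-- If `G` is a graph on `n ≥ 1` vertices with `ᾱ(G) = n` and `r` connected
components, then `n ≤ 2 ^ r - 1`; equivalently, `r ≥ ⌈log₂ (n + 1)⌉`. -/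
theorem stmt9 {V : Type*} [Fintype V] [DecidableEq V] [Nonempty V] (G : SimpleGraph V)
    (h : G.bipHoleNum = Fintype.card V) :
    Fintype.card V ≤ 2 ^ (Nat.card G.ConnectedComponent) - 1 ∧
      Nat.clog 2 (Fintype.card V + 1) ≤ Nat.card G.ConnectedComponent :=
  stmt9_general G h
end

section
/- Let G be a finite simple graph and let x, y be distinct vertices with d(x) ≥ ᾱ(G) and d(y) ≥ ᾱ(G). Then for every vertex v with v ≠ x and v ≠ y, there is a path from x to y in the graph G − v obtained by deleting v. (In particular, x and y lie in the same block of G.) -/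
/-- If `x ≠ y` are vertices with `d(x) ≥ ᾱ(G)` and `d(y) ≥ ᾱ(G)`, then
for every vertex `v` with `v ≠ x` and `v ≠ y`, there is a path from `x` to `y` in `G - v`. -/
theorem stmt11 {V : Type*} [Fintype V] [DecidableEq V] (G : SimpleGraph V) [DecidableRel G.Adj]
    (x y : V) (hxy : x ≠ y)
    (hx : G.bipHoleNum ≤ G.degree x) (hy : G.bipHoleNum ≤ G.degree y)
    (v : V) (hvx : v ≠ x) (hvy : v ≠ y) :
    (G.induce ({v}ᶜ : Set V)).Reachable
      ⟨x, by simpa using hvx.symm⟩ ⟨y, by simpa using hvy.symm⟩ := by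
  classical
  by_contra hreach
  have hvx' : x ∈ ({v}ᶜ : Set V) := by simpa using hvx.symm
  have hvy' : y ∈ ({v}ᶜ : Set V) := by simpa using hvy.symm
  set H := G.induce ({v}ᶜ : Set V) with hH
  -- the defining set of bipHoleNum is nonempty
  have hne : {k | 0 < k ∧ ∃ s t : ℕ, 0 < s ∧ 0 < t ∧ s + t = k + 1 ∧
      ¬ G.HasBipHole s t}.Nonempty := by
    refine ⟨Fintype.card V + 1, by omega, Fintype.card V + 1, 1, by omega, by omega, by omega, ?_⟩
    rintro ⟨S, T, -, hS, -, -⟩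
    have h1 := Finset.card_le_univ S
    omega
  have hmem : G.bipHoleNum ∈ {k | 0 < k ∧ ∃ s t : ℕ, 0 < s ∧ 0 < t ∧ s + t = k + 1 ∧
      ¬ G.HasBipHole s t} := Nat.sInf_mem hne
  obtain ⟨hk, s, t, hs, ht, hst, hnohole⟩ := hmem
  set k := G.bipHoleNum with hkdef
  -- A = component of x in G - v, B = rest of V \ {v}
  let A : Finset V := Finset.univ.filter
    (fun u => ∃ h : u ∈ ({v}ᶜ : Set V), H.Reachable ⟨x, hvx'⟩ ⟨u, h⟩)
  let B : Finset V := Finset.univ.filter (fun u => u ≠ v ∧ u ∉ A)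
  have hmemA : ∀ u, u ∈ A ↔ ∃ h : u ∈ ({v}ᶜ : Set V), H.Reachable ⟨x, hvx'⟩ ⟨u, h⟩ := by
    intro u; simp [A]
  have hmemB : ∀ u, u ∈ B ↔ u ≠ v ∧ u ∉ A := by intro u; simp [B]
  have hxA : x ∈ A := (hmemA x).2 ⟨hvx', SimpleGraph.Reachable.refl _⟩
  have hyB : y ∈ B := by
    rw [hmemB]
    refine ⟨hvy.symm, fun hyA => ?_⟩
    obtain ⟨h, hr⟩ := (hmemA y).1 hyA
    exact hreach hr
  have hdisj : Disjoint A B := by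
    rw [Finset.disjoint_left]
    intro a haA haB
    exact ((hmemB a).1 haB).2 haA
  have hnoadj : ∀ a ∈ A, ∀ b ∈ B, ¬ G.Adj a b := by
    intro a haA b hbB hadj
    obtain ⟨ha, hra⟩ := (hmemA a).1 haA
    obtain ⟨hbv, hbA⟩ := (hmemB b).1 hbB
    have hb : b ∈ ({v}ᶜ : Set V) := by simpa using hbv
    have : H.Adj ⟨a, ha⟩ ⟨b, hb⟩ := by simpa [hH] using hadj
    exact hbA ((hmemA b).2 ⟨hb, hra.trans this.reachable⟩)
  -- neighbors of x (other than v) are in A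
  have hsubA : insert x ((G.neighborFinset x).erase v) ⊆ A := by
    intro u hu
    rcases Finset.mem_insert.1 hu with rfl | hu
    · exact hxA
    · obtain ⟨huv, hadj⟩ := Finset.mem_erase.1 hu
      rw [SimpleGraph.mem_neighborFinset] at hadj
      have huc : u ∈ ({v}ᶜ : Set V) := by simpa using huv
      have : H.Adj ⟨x, hvx'⟩ ⟨u, huc⟩ := by simpa [hH] using hadj
      exact (hmemA u).2 ⟨huc, this.reachable⟩
  have hcardA : k ≤ A.card := by
    have h1 : (insert x ((G.neighborFinset x).erase v)).card ≤ A.card :=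
      Finset.card_le_card hsubA
    have hxnot : x ∉ (G.neighborFinset x).erase v := by
      intro h
      exact G.irrefl (SimpleGraph.mem_neighborFinset G x x |>.1 (Finset.mem_of_mem_erase h))
    rw [Finset.card_insert_of_notMem hxnot] at h1
    have h2 : (G.neighborFinset x).card - 1 ≤ ((G.neighborFinset x).erase v).card :=
      Finset.pred_card_le_card_erase
    have h3 : (G.neighborFinset x).card = G.degree x := G.card_neighborFinset_eq_degree x
    omega
  -- neighbors of y (other than v) are in B
  have hsubB : insert y ((G.neighborFinset y).erase v) ⊆ B := by
    intro u hu
    rcases Finset.mem_insert.1 hu with rfl | hu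
    · exact hyB
    · obtain ⟨huv, hadj⟩ := Finset.mem_erase.1 hu
      rw [SimpleGraph.mem_neighborFinset] at hadj
      have huc : u ∈ ({v}ᶜ : Set V) := by simpa using huv
      rw [hmemB]
      refine ⟨huv, fun huA => ?_⟩
      obtain ⟨h, hr⟩ := (hmemA u).1 huA
      have : H.Adj ⟨u, huc⟩ ⟨y, hvy'⟩ := by simpa [hH] using hadj.symm
      exact hreach (hr.trans this.reachable)
  have hcardB : k ≤ B.card := by
    have h1 : (insert y ((G.neighborFinset y).erase v)).card ≤ B.card :=
      Finset.card_le_card hsubB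
    have hynot : y ∉ (G.neighborFinset y).erase v := by
      intro h
      exact G.irrefl (SimpleGraph.mem_neighborFinset G y y |>.1 (Finset.mem_of_mem_erase h))
    rw [Finset.card_insert_of_notMem hynot] at h1
    have h2 : (G.neighborFinset y).card - 1 ≤ ((G.neighborFinset y).erase v).card :=
      Finset.pred_card_le_card_erase
    have h3 : (G.neighborFinset y).card = G.degree y := G.card_neighborFinset_eq_degree y
    omega
  -- extract the (s,t)-bipartite-hole
  obtain ⟨S, hSA, hScard⟩ := Finset.exists_subset_card_eq (show s ≤ A.card by omega)
  obtain ⟨T, hTB, hTcard⟩ := Finset.exists_subset_card_eq (show t ≤ B.card by omega)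
  exact hnohole ⟨S, T, hdisj.mono hSA hTB, hScard, hTcard,
    fun a ha b hb => hnoadj a (hSA ha) b (hTB hb)⟩
end

section
/- Let G be a finite simple graph and let C be a cycle of G, with a fixed cyclic orientation, such that there is no cycle C' of G with V(C) ⊊ V(C'). Let H be a connected component of G − V(C) and let T = {v ∈ V(C) : v has a neighbor in V(H)}. Then no two vertices that are consecutive on C both belong to T; that is, for every v ∈ T, the successor v⁺ of v on C is not in T. -/
/-!
If consecutive vertices `u`, `v = u⁺` of `C` had neighbours `x`, `y` in `H`, replacing the edge
`uv` of `C` by the detour `u x ⋯ y v` through a path `P` of `H` would give a cycle whose vertex set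
is `V(C) ∪ V(P) ⊋ V(C)`, contradicting the maximality of `C`.
-/

open SimpleGraph Walk

namespace SimpleGraph

variable {V : Type*} {G : SimpleGraph V}

lemma exists_isPath_of_connected_induce {s : Set V} (hs : (G.induce s).Connected) {x y : V}
    (hx : x ∈ s) (hy : y ∈ s) : ∃ p : G.Walk x y, p.IsPath ∧ ∀ a ∈ p.support, a ∈ s := by
  classical
  obtain ⟨p, hp⟩ := (hs.preconnected ⟨x, hx⟩ ⟨y, hy⟩).some.toPath
  refine ⟨p.map (Embedding.induce s).toHom, hp.map Subtype.val_injective, fun a ha => ?_⟩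
  replace ha : a ∈ (p.map (Embedding.induce s).toHom).support := ha
  rw [Walk.support_map, List.mem_map] at ha
  obtain ⟨a, -, rfl⟩ := ha
  exact a.2

namespace Walk

lemma IsCycle.eq_of_mem_darts_of_fst_eq {w : V} {c : G.Walk w w} (hc : c.IsCycle)
    {d d' : G.Dart} (hd : d ∈ c.darts) (hd' : d' ∈ c.darts) (h : d.fst = d'.fst) : d = d' := by
  have hnodup : (c.darts.map (·.fst)).Nodup := by
    rw [map_fst_darts]
    exact hc.nodup_dropLast_support
  exact List.inj_on_of_nodup_map hnodup hd hd' h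

lemma IsCycle.exists_isPath_of_mem_darts {w : V} {c : G.Walk w w} (hc : c.IsCycle)
    {d : G.Dart} (hd : d ∈ c.darts) :
    ∃ q : G.Walk d.snd d.fst, q.IsPath ∧ ∀ a, a ∈ q.support ↔ a ∈ c.support := by
  classical
  have hu := c.dart_fst_mem_support_of_mem_darts hd
  have hrot := hc.rotate hu
  obtain ⟨b, hub, q, hq⟩ := not_nil_iff.mp hrot.not_nil
  rw [hq, cons_isCycle_iff] at hrot
  have hd₀ : (⟨(d.fst, b), hub⟩ : G.Dart) ∈ (c.rotate d.fst hu).darts := by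
    simp [hq]
  have hdrot : d ∈ (c.rotate d.fst hu).darts := (rotate_darts c d.fst hu).mem_iff.mpr hd
  obtain rfl : d.snd = b :=
    congrArg (·.snd) ((hc.rotate hu).eq_of_mem_darts_of_fst_eq hdrot hd₀ rfl)
  refine ⟨q, hrot.1, fun a => ?_⟩
  rw [← mem_support_rotate_iff c d.fst hu, hq, support_cons, List.mem_cons]
  exact ⟨Or.inr, by rintro (rfl | h); exacts [q.end_mem_support, h]⟩

lemma IsPath.isCycle_detour {u v x y : V} {q : G.Walk v u} (hq : q.IsPath) {p : G.Walk x y}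
    (hp : p.IsPath) (hdisj : p.support.Disjoint q.support) (huv : u ≠ v) (hux : G.Adj u x)
    (hyv : G.Adj y v) : ((cons hux p).append (cons hyv q)).IsCycle := by
  refine IsPath.isCycle_append (hp.cons fun hu => hdisj hu q.end_mem_support)
    (hq.cons fun hy => hdisj p.end_mem_support hy) (by simpa using hdisj) (Or.inr ?_)
  have : q.length ≠ 0 := fun h => huv (eq_of_length_eq_zero h).symm
  simp only [length_cons]
  omega

end Walk

end SimpleGraph

theorem stmt12_general {V : Type*} (G : SimpleGraph V)
    (v₀ : V) (c : G.Walk v₀ v₀) (hc : c.IsCycle)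
    (hmax : ∀ (w : V) (c' : G.Walk w w), c'.IsCycle →
      ¬ {u : V | u ∈ c.support} ⊂ {u : V | u ∈ c'.support})
    (H : Set V)
    (hHdisj : ∀ x ∈ H, x ∉ c.support)
    (hHconn : (G.induce H).Connected)
    (T : Set V) (hT : T = {u : V | u ∈ c.support ∧ ∃ w ∈ H, G.Adj u w}) :
    ∀ d ∈ c.darts, d.fst ∈ T → d.snd ∉ T := by
  subst hT
  rintro d hd ⟨-, x, hxH, hux⟩ ⟨-, y, hyH, hvy⟩
  obtain ⟨q, hq, hqc⟩ := hc.exists_isPath_of_mem_darts hd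
  obtain ⟨p, hp, hpH⟩ := exists_isPath_of_connected_induce hHconn hxH hyH
  have hdisj : p.support.Disjoint q.support := fun a hap haq =>
    hHdisj a (hpH a hap) ((hqc a).mp haq)
  have hcyc := hq.isCycle_detour hp hdisj d.adj.ne hux hvy.symm
  refine hmax _ _ hcyc ⟨fun a ha => ?_, fun hsub => hHdisj x hxH (hsub ?_)⟩
  · simp [show a ∈ q.support from (hqc a).mpr ha]
  · simp

/-- Let `C` be a cycle of `G` (with the orientation given by traversal,
so that the darts of `C` record each vertex together with its successor) such that no cycle
`C'` of `G` satisfies `V(C) ⊊ V(C')`. Let `H` be (the vertex set of) a connected component of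
`G - V(C)` and `T` the set of vertices of `C` with a neighbor in `H`. Then no two vertices
consecutive on `C` both lie in `T`: for every dart `d` of `C`, if `d.fst ∈ T` then
`d.snd ∉ T`. -/
theorem stmt12 {V : Type*} (G : SimpleGraph V)
    (v₀ : V) (c : G.Walk v₀ v₀) (hc : c.IsCycle)
    (hmax : ∀ (w : V) (c' : G.Walk w w), c'.IsCycle →
      ¬ {u : V | u ∈ c.support} ⊂ {u : V | u ∈ c'.support})
    (H : Set V)
    (hHdisj : ∀ x ∈ H, x ∉ c.support)
    (hHconn : (G.induce H).Connected)
    (hHmax : ∀ x ∈ H, ∀ y, y ∉ H → y ∉ c.support → ¬ G.Adj x y)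
    (T : Set V) (hT : T = {u : V | u ∈ c.support ∧ ∃ w ∈ H, G.Adj u w}) :
    ∀ d ∈ c.darts, d.fst ∈ T → d.snd ∉ T :=
  stmt12_general G v₀ c hc hmax H hHdisj hHconn T hT
end

section
/- Let G be a finite simple triangle-free graph. Then there do not exist three distinct vertices x, y, z each of degree at least ᾱ(G) such that y and z are adjacent while x is adjacent to neither y nor z. -/
open SimpleGraph

lemma hasBipHole_symm {V : Type*} {G : SimpleGraph V} {s t : ℕ}
    (h : G.HasBipHole s t) : G.HasBipHole t s := by
  obtain ⟨S, T, hd, hS, hT, hno⟩ := h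
  exact ⟨T, S, hd.symm, hT, hS, fun a ha b hb hab => hno b hb a ha hab.symm⟩

lemma aux_hole {V : Type*} [Fintype V] [DecidableEq V] (G : SimpleGraph V) [DecidableRel G.Adj]
    (htf : G.CliqueFree 3) {x w : V} (hxw : ¬ G.Adj x w) {s t : ℕ} (hs : 0 < s)
    (hm : s + t - 1 ≤ G.degree x)
    (hc : t ≤ (G.neighborFinset x \ G.neighborFinset w).card) :
    G.HasBipHole s t := by
  obtain ⟨T, hT_sub, hT_card⟩ := Finset.exists_subset_card_eq hc
  have hTx : T ⊆ G.neighborFinset x := hT_sub.trans (Finset.sdiff_subset)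
  have hcard_sdiff : (G.neighborFinset x \ T).card = G.degree x - t := by
    rw [Finset.card_sdiff_of_subset hTx, hT_card, SimpleGraph.card_neighborFinset_eq_degree]
  have hs1 : s - 1 ≤ (G.neighborFinset x \ T).card := by omega
  obtain ⟨S', hS'_sub, hS'_card⟩ := Finset.exists_subset_card_eq hs1
  have hS'x : S' ⊆ G.neighborFinset x := hS'_sub.trans Finset.sdiff_subset
  have hwnx : w ∉ G.neighborFinset x := by
    simp [SimpleGraph.mem_neighborFinset, hxw]
  have hwS' : w ∉ S' := fun h => hwnx (hS'x h)
  have hwT : w ∉ T := fun h => hwnx (hTx h)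
  refine ⟨insert w S', T, ?_, ?_, hT_card, ?_⟩
  · rw [Finset.disjoint_insert_left]
    refine ⟨hwT, Finset.disjoint_left.mpr fun a haS' haT =>
      (Finset.mem_sdiff.mp (hS'_sub haS')).2 haT⟩
  · rw [Finset.card_insert_of_notMem hwS', hS'_card]
    omega
  · intro a ha b hb hadj
    rcases Finset.mem_insert.mp ha with rfl | haS'
    · exact (Finset.mem_sdiff.mp (hT_sub hb)).2
        (by rw [SimpleGraph.mem_neighborFinset]; exact hadj)
    · have hxa : G.Adj x a := (SimpleGraph.mem_neighborFinset _ _ _).mp (hS'x haS')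
      have hxb : G.Adj x b := (SimpleGraph.mem_neighborFinset _ _ _).mp (hTx hb)
      exact htf {x, a, b} (SimpleGraph.is3Clique_triple_iff.mpr ⟨hxa, hxb, hadj⟩)

/-- In a triangle-free graph `G` there are no three distinct vertices
`x, y, z`, each of degree at least `ᾱ(G)`, with `y` adjacent to `z` and `x` adjacent to
neither `y` nor `z`. -/
theorem stmt14 {V : Type*} [Fintype V] [DecidableEq V] (G : SimpleGraph V) [DecidableRel G.Adj]
    (htf : G.CliqueFree 3) :
    ¬ ∃ x y z : V, x ≠ y ∧ x ≠ z ∧ y ≠ z ∧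
      G.bipHoleNum ≤ G.degree x ∧ G.bipHoleNum ≤ G.degree y ∧ G.bipHoleNum ≤ G.degree z ∧
      G.Adj y z ∧ ¬ G.Adj x y ∧ ¬ G.Adj x z := by
  rintro ⟨x, y, z, hxy, hxz, hyz, hdx, hdy, hdz, hadjyz, hnxy, hnxz⟩
  have hne : {k | 0 < k ∧ ∃ s t : ℕ, 0 < s ∧ 0 < t ∧ s + t = k + 1 ∧
      ¬ G.HasBipHole s t}.Nonempty := by
    refine ⟨2 * Fintype.card V + 1, by omega, Fintype.card V + 1, Fintype.card V + 1,
      by omega, by omega, by omega, ?_⟩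
    rintro ⟨S, T, -, hS, -, -⟩
    have h1 := Finset.card_le_univ S
    omega
  have hmem := Nat.sInf_mem hne
  obtain ⟨hkpos, s, t, hs, ht, hst, hhole⟩ := hmem
  -- `bipHoleNum G = sInf ...` definitionally
  have hstk : s + t = G.bipHoleNum + 1 := hst
  have hm : s + t - 1 ≤ G.degree x := by omega
  set Nx := G.neighborFinset x with hNx
  set Ny := G.neighborFinset y with hNy
  set Nz := G.neighborFinset z with hNz
  have hdisj : Disjoint (Nx ∩ Ny) (Nx ∩ Nz) := by
    rw [Finset.disjoint_left]
    intro u hu1 hu2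
    have h1 : G.Adj y u := (SimpleGraph.mem_neighborFinset _ _ _).mp (Finset.mem_inter.mp hu1).2
    have h2 : G.Adj z u := (SimpleGraph.mem_neighborFinset _ _ _).mp (Finset.mem_inter.mp hu2).2
    exact htf {y, z, u} (SimpleGraph.is3Clique_triple_iff.mpr ⟨hadjyz, h1, h2⟩)
  have hsum : (Nx ∩ Ny).card + (Nx ∩ Nz).card ≤ G.degree x := by
    rw [← Finset.card_union_of_disjoint hdisj, ← SimpleGraph.card_neighborFinset_eq_degree G x]
    exact Finset.card_le_card
      (Finset.union_subset Finset.inter_subset_left Finset.inter_subset_left)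
  have hdy : (Nx \ Ny).card + (Nx ∩ Ny).card = G.degree x := by
    rw [Finset.card_sdiff_add_card_inter, hNx, SimpleGraph.card_neighborFinset_eq_degree]
  have hdz : (Nx \ Nz).card + (Nx ∩ Nz).card = G.degree x := by
    rw [Finset.card_sdiff_add_card_inter, hNx, SimpleGraph.card_neighborFinset_eq_degree]
  have hcases : t ≤ (Nx \ Ny).card ∨ s ≤ (Nx \ Ny).card ∨
      t ≤ (Nx \ Nz).card ∨ s ≤ (Nx \ Nz).card := by omega
  rcases hcases with h | h | h | h
  · exact hhole (aux_hole G htf hnxy hs hm h)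
  · exact hhole (hasBipHole_symm (aux_hole G htf hnxy ht (by omega) h))
  · exact hhole (aux_hole G htf hnxz hs hm h)
  · exact hhole (hasBipHole_symm (aux_hole G htf hnxz ht (by omega) h))
end

section
/- Let G be a bipartite finite simple graph on at least 2 vertices such that every pair of distinct nonadjacent vertices x, y satisfies d(x) + d(y) ≥ 2·ᾱ(G) − 1. Then G is isomorphic to the balanced complete bipartite graph K_{m,m} for some positive integer m. -/
open Finset

/-- If `C` is an independent-ish set (no edges inside) with `s + t ≤ |C|`, then
`G` has an `(s,t)`-bipartite-hole. -/
lemma hole_of_side {V : Type*} [DecidableEq V] (G : SimpleGraph V)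
    (C : Finset V) (hC : ∀ x ∈ C, ∀ y ∈ C, ¬ G.Adj x y) {s t : ℕ}
    (h : s + t ≤ C.card) : G.HasBipHole s t := by
  obtain ⟨S, hSC, hScard⟩ := Finset.exists_subset_card_eq (le_trans (Nat.le_add_right s t) h)
  have hT : t ≤ (C \ S).card := by
    rw [Finset.card_sdiff_of_subset hSC, hScard]; omega
  obtain ⟨T, hTC, hTcard⟩ := Finset.exists_subset_card_eq hT
  refine ⟨S, T, ?_, hScard, hTcard, ?_⟩
  · exact (Finset.sdiff_disjoint.mono_left hTC).symm
  · intro a ha b hb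
    exact hC a (hSC ha) b (Finset.mem_sdiff.mp (hTC hb)).1

/-- A bipartite graph on at least 2 vertices in which every pair of
distinct nonadjacent vertices `x, y` satisfies `d(x) + d(y) ≥ 2ᾱ(G) - 1` is isomorphic to a
balanced complete bipartite graph `K_{m,m}` for some `m ≥ 1`. -/
theorem stmt15 {V : Type*} [Fintype V] [DecidableEq V] (G : SimpleGraph V) [DecidableRel G.Adj]
    (hcard : 2 ≤ Fintype.card V)
    (hbip : ∃ A : Set V, ∀ ⦃x y : V⦄, G.Adj x y →
      ((x ∈ A ∧ y ∉ A) ∨ (x ∉ A ∧ y ∈ A)))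
    (hdeg : ∀ x y : V, x ≠ y → ¬ G.Adj x y →
      2 * G.bipHoleNum - 1 ≤ G.degree x + G.degree y) :
    ∃ m : ℕ, 0 < m ∧ Nonempty (G ≃g completeBipartiteGraph (Fin m) (Fin m)) := by
  classical
  obtain ⟨A, hA⟩ := hbip
  set Af : Finset V := univ.filter (· ∈ A) with hAfdef
  set Bf : Finset V := univ.filter (· ∉ A) with hBfdef
  have hmemA : ∀ x, x ∈ Af ↔ x ∈ A := by intro x; simp [hAfdef]
  have hmemB : ∀ x, x ∈ Bf ↔ x ∉ A := by intro x; simp [hBfdef]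
  set a : ℕ := Af.card with hadef
  set b : ℕ := Bf.card with hbdef
  have habn : a + b = Fintype.card V := by
    rw [hadef, hbdef, hAfdef, hBfdef]
    simpa using Finset.card_filter_add_card_filter_not (s := univ) (p := (· ∈ A))
  -- no edges within a side
  have hAside : ∀ x ∈ Af, ∀ y ∈ Af, ¬ G.Adj x y := by
    intro x hx y hy hxy
    rcases hA hxy with ⟨h1, h2⟩ | ⟨h1, h2⟩
    · exact h2 ((hmemA y).mp hy)
    · exact h1 ((hmemA x).mp hx)
  have hBside : ∀ x ∈ Bf, ∀ y ∈ Bf, ¬ G.Adj x y := by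
    intro x hx y hy hxy
    rcases hA hxy with ⟨h1, h2⟩ | ⟨h1, h2⟩
    · exact (hmemB x).mp hx h1
    · exact (hmemB y).mp hy h2
  -- the defining set of the bipartite-hole-number is nonempty
  have hne : {k | 0 < k ∧ ∃ s t : ℕ, 0 < s ∧ 0 < t ∧ s + t = k + 1 ∧
      ¬ G.HasBipHole s t}.Nonempty := by
    refine ⟨Fintype.card V, by omega, Fintype.card V, 1, by omega, one_pos, rfl, ?_⟩
    rintro ⟨S, T, hdis, hS, hT, -⟩
    have hSuniv : S = univ := Finset.eq_univ_of_card S hS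
    obtain ⟨x, hxT⟩ := Finset.card_pos.mp (by omega : 0 < T.card)
    exact (Finset.disjoint_left.mp hdis (hSuniv ▸ Finset.mem_univ x)) hxT
  obtain ⟨hαpos, s, t, hs, ht, hst, hnohole⟩ := Nat.sInf_mem hne
  have hαpos' : 0 < G.bipHoleNum := hαpos
  have hst' : s + t = G.bipHoleNum + 1 := hst
  -- ᾱ ≥ max a b
  have hmax : max a b ≤ G.bipHoleNum := by
    by_contra h
    push_neg at h
    rcases le_total a b with hab | hab
    · refine hnohole (hole_of_side G Bf hBside ?_)
      show s + t ≤ b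
      rw [max_eq_right hab] at h
      omega
    · refine hnohole (hole_of_side G Af hAside ?_)
      show s + t ≤ a
      rw [max_eq_left hab] at h
      omega
  -- degree bounds
  have hdegB : ∀ x ∈ Bf, G.degree x ≤ a := by
    intro x hx
    have : G.neighborFinset x ⊆ Af := by
      intro z hz
      rw [SimpleGraph.mem_neighborFinset] at hz
      rcases hA hz with ⟨h1, h2⟩ | ⟨h1, h2⟩
      · exact absurd h1 ((hmemB x).mp hx)
      · exact (hmemA z).mpr h2
    exact Finset.card_le_card this
  have hdegA : ∀ x ∈ Af, G.degree x ≤ b := by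
    intro x hx
    have : G.neighborFinset x ⊆ Bf := by
      intro z hz
      rw [SimpleGraph.mem_neighborFinset] at hz
      rcases hA hz with ⟨h1, h2⟩ | ⟨h1, h2⟩
      · exact (hmemB z).mpr h2
      · exact absurd ((hmemA x).mp hx) h1
    exact Finset.card_le_card this
  -- both sides are nonempty
  have hnoedge_of_empty : ∀ x, (∀ z, z ∉ A) ∨ (∀ z, z ∈ A) → G.degree x = 0 := by
    intro x h
    rw [SimpleGraph.degree, Finset.card_eq_zero, Finset.eq_empty_iff_forall_notMem]
    intro z hz
    rw [SimpleGraph.mem_neighborFinset] at hz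
    rcases hA hz with ⟨h1, h2⟩ | ⟨h1, h2⟩ <;> rcases h with h | h
    · exact h x h1
    · exact h2 (h z)
    · exact h z h2
    · exact h1 (h x)
  have hapos : 0 < a := by
    by_contra h
    push_neg at h
    have hAempty : ∀ z, z ∉ A := by
      intro z hz
      have hz2 : z ∈ Af := (hmemA z).mpr hz
      have : 0 < a := Finset.card_pos.mpr ⟨z, hz2⟩
      omega
    obtain ⟨x, y, hxy⟩ := Fintype.exists_pair_of_one_lt_card (α := V) (by omega)
    have hnadj : ¬ G.Adj x y := by
      intro hadj
      rcases hA hadj with ⟨h1, _⟩ | ⟨_, h1⟩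
      · exact hAempty x h1
      · exact hAempty y h1
    have := hdeg x y hxy hnadj
    rw [hnoedge_of_empty x (Or.inl hAempty), hnoedge_of_empty y (Or.inl hAempty)] at this
    omega
  have hbpos : 0 < b := by
    by_contra h
    push_neg at h
    have hAfull : ∀ z, z ∈ A := by
      intro z
      by_contra hz
      have hz2 : z ∈ Bf := (hmemB z).mpr hz
      have : 0 < b := Finset.card_pos.mpr ⟨z, hz2⟩
      omega
    obtain ⟨x, y, hxy⟩ := Fintype.exists_pair_of_one_lt_card (α := V) (by omega)
    have hnadj : ¬ G.Adj x y := by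
      intro hadj
      rcases hA hadj with ⟨_, h1⟩ | ⟨h1, _⟩
      · exact h1 (hAfull y)
      · exact h1 (hAfull x)
    have := hdeg x y hxy hnadj
    rw [hnoedge_of_empty x (Or.inr hAfull), hnoedge_of_empty y (Or.inr hAfull)] at this
    omega
  -- the sides have equal size
  have hab : a = b := by
    rcases lt_trichotomy a b with h | h | h
    · -- b ≥ 2: pick two vertices in Bf
      have hb2 : 1 < b := by omega
      obtain ⟨x, hx, y, hy, hxy⟩ := Finset.one_lt_card.mp (show 1 < Bf.card from hb2)
      have hd := hdeg x y hxy (hBside x hx y hy)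
      have h1 := hdegB x hx
      have h2 := hdegB y hy
      have h3 : b ≤ G.bipHoleNum := le_trans (le_max_right a b) hmax
      omega
    · exact h
    · have ha2 : 1 < a := by omega
      obtain ⟨x, hx, y, hy, hxy⟩ := Finset.one_lt_card.mp (show 1 < Af.card from ha2)
      have hd := hdeg x y hxy (hAside x hx y hy)
      have h1 := hdegA x hx
      have h2 := hdegA y hy
      have h3 : a ≤ G.bipHoleNum := le_trans (le_max_left a b) hmax
      omega
  -- completeness: every cross pair is adjacent
  have hcomp : ∀ x y : V, x ∈ A → y ∉ A → G.Adj x y := by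
    intro x y hx hy
    by_contra hadj
    have hxy : x ≠ y := fun h => hy (h ▸ hx)
    have hd := hdeg x y hxy hadj
    have hxAf : x ∈ Af := (hmemA x).mpr hx
    have hyBf : y ∈ Bf := (hmemB y).mpr hy
    have h1 : G.degree x ≤ b - 1 := by
      have hsub : G.neighborFinset x ⊆ Bf.erase y := by
        intro z hz
        rw [SimpleGraph.mem_neighborFinset] at hz
        refine Finset.mem_erase.mpr ⟨fun h => hadj (h ▸ hz), ?_⟩
        rcases hA hz with ⟨h1, h2⟩ | ⟨h1, h2⟩
        · exact (hmemB z).mpr h2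
        · exact absurd hx h1
      calc G.degree x ≤ (Bf.erase y).card := Finset.card_le_card hsub
        _ = b - 1 := by rw [Finset.card_erase_of_mem hyBf]
    have h2 : G.degree y ≤ a - 1 := by
      have hsub : G.neighborFinset y ⊆ Af.erase x := by
        intro z hz
        rw [SimpleGraph.mem_neighborFinset] at hz
        refine Finset.mem_erase.mpr ⟨fun h => hadj (G.adj_symm (h ▸ hz)), ?_⟩
        rcases hA hz with ⟨h1, h2⟩ | ⟨h1, h2⟩
        · exact absurd h1 hy
        · exact (hmemA z).mpr h2
      calc G.degree y ≤ (Af.erase x).card := Finset.card_le_card hsub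
        _ = a - 1 := by rw [Finset.card_erase_of_mem hxAf]
    have h3 : a ≤ G.bipHoleNum := le_trans (le_max_left a b) hmax
    omega
  -- adjacency characterization
  have hadj_iff : ∀ x y : V, G.Adj x y ↔ ((x ∈ A ∧ y ∉ A) ∨ (x ∉ A ∧ y ∈ A)) := by
    intro x y
    constructor
    · exact fun h => hA h
    · rintro (⟨h1, h2⟩ | ⟨h1, h2⟩)
      · exact hcomp x y h1 h2
      · exact G.adj_symm (hcomp y x h2 h1)
  -- build the isomorphism
  refine ⟨a, hapos, ?_⟩
  have hcA : Fintype.card ↥A = a := by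
    rw [hadef, hAfdef]
    exact Fintype.card_subtype (· ∈ A)
  have hcB : Fintype.card ↥(Aᶜ : Set V) = a := by
    rw [hab, hbdef, hBfdef]
    rw [Fintype.card_subtype (· ∈ (Aᶜ : Set V))]
    congr 1
  let e1 : ↥A ≃ Fin a := Fintype.equivFinOfCardEq hcA
  let e2 : ↥(Aᶜ : Set V) ≃ Fin a := Fintype.equivFinOfCardEq hcB
  let e : V ≃ Fin a ⊕ Fin a := (Equiv.Set.sumCompl A).symm.trans (Equiv.sumCongr e1 e2)
  refine ⟨⟨e, ?_⟩⟩
  intro x y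
  rw [hadj_iff]
  by_cases hx : x ∈ A <;> by_cases hy : y ∈ A <;>
    simp [e, Equiv.Set.sumCompl_symm_apply_of_mem, Equiv.Set.sumCompl_symm_apply_of_notMem,
      hx, hy]
end

section
/- Let q ≥ 1 and k ≥ 2q be integers, let d = 2(q+1)k and n = 2d + 2q − 1, and let G_{q,k} be the circulant graph on vertex set ℤ_n in which x and y are adjacent if and only if y − x (mod n) lies in U ∪ (−U), where U = ⋃_{i=0}^{q} {2ik + 1, 2ik + 2, …, 2ik + k}. Then G_{q,k} is d-regular, every two distinct vertices x, y satisfy |N[x] ∪ N[y]| ≥ d + 2q + 1, G_{q,k} contains no (2, d−1)-bipartite-hole, and consequently ᾱ(G_{q,k}) ≤ d. -/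
namespace Stmt17Aux


/-- `PP K Q w` : `w` lies in one of the positive blocks `[2Ki+1, 2Ki+K]`, `0 ≤ i ≤ Q`. -/
def PP (K Q w : ℤ) : Prop := ∃ i : ℤ, 0 ≤ i ∧ i ≤ Q ∧ 2*K*i + 1 ≤ w ∧ w ≤ 2*K*i + K

/-- `Pat K Q v` : `v` is (the centered representative of) an element of the jump-closure set. -/
def Pat (K Q v : ℤ) : Prop := v = 0 ∨ PP K Q v ∨ PP K Q (-v)

variable {K Q : ℤ}

lemma PP_pos (hK0 : 0 ≤ K) {w : ℤ} (h : PP K Q w) : 1 ≤ w := by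
  obtain ⟨i, hi0, _, h1, _⟩ := h
  have h0 : 0 ≤ 2*K*i := mul_nonneg (by linarith) hi0
  linarith

lemma PP_le (hK0 : 0 ≤ K) {w : ℤ} (h : PP K Q w) : w ≤ 2*K*Q + K := by
  obtain ⟨i, _, hiQ, _, h2⟩ := h
  have := mul_le_mul_of_nonneg_left hiQ (show (0:ℤ) ≤ 2*K by linarith)
  linarith

lemma PP_intro (hK : 1 ≤ K) {w : ℤ} (i : ℤ) (hi : 0 ≤ i)
    (h1 : 2*K*i + 1 ≤ w) (h2 : w ≤ 2*K*i + K) (hM : w ≤ 2*K*Q + K) : PP K Q w := by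
  refine ⟨i, hi, ?_, h1, h2⟩
  by_contra hc
  push_neg at hc
  have h3 : 2*K*(Q+1) ≤ 2*K*i := mul_le_mul_of_nonneg_left (by linarith) (by linarith)
  have h4 : 2*K*(Q+1) = 2*K*Q + 2*K := by ring
  linarith

lemma not_PP_gap (hK : 1 ≤ K) (i₀ e : ℤ) (he : (K+1 ≤ e ∧ e ≤ 2*K) ∨ e = 0) :
    ¬ PP K Q (2*K*i₀ + e) := by
  rintro ⟨i, hi0, hiQ, h1, h2⟩
  rcases he with ⟨he1, he2⟩ | rfl
  · have hio : i₀ < i := by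
      by_contra hcon
      push_neg at hcon
      have : 2*K*i ≤ 2*K*i₀ := mul_le_mul_of_nonneg_left hcon (by linarith)
      linarith
    have h5 : 2*K*(i₀+1) ≤ 2*K*i := mul_le_mul_of_nonneg_left (by linarith) (by linarith)
    have h6 : 2*K*(i₀+1) = 2*K*i₀ + 2*K := by ring
    linarith
  · have hio : i < i₀ := by
      by_contra hcon
      push_neg at hcon
      have : 2*K*i₀ ≤ 2*K*i := mul_le_mul_of_nonneg_left hcon (by linarith)
      linarith
    have h5 : 2*K*(i+1) ≤ 2*K*i₀ := mul_le_mul_of_nonneg_left (by linarith) (by linarith)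
    have h6 : 2*K*(i+1) = 2*K*i + 2*K := by ring
    linarith

lemma not_Pat_big (hK : 1 ≤ K) (hQ0 : 0 ≤ Q) {w : ℤ} (h : 2*K*Q + K + 1 ≤ w) :
    ¬ Pat K Q w := by
  have hM0 : 0 ≤ 2*K*Q := mul_nonneg (by linarith) hQ0
  rintro (rfl | hP | hP)
  · linarith
  · have := PP_le (by linarith) hP; linarith
  · have := PP_pos (by linarith) hP; linarith

lemma pat_or_pos (hK : 1 ≤ K) {w : ℤ} (h1 : 1 ≤ w) (h2 : w + K ≤ 2*K*Q + K) :
    PP K Q w ∨ PP K Q (w + K) := by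
  have h2K : (0:ℤ) < 2*K := by linarith
  have hdm := Int.mul_ediv_add_emod w (2*K)
  have hr0 : 0 ≤ w % (2*K) := Int.emod_nonneg w (by linarith)
  have hrlt : w % (2*K) < 2*K := Int.emod_lt_of_pos w h2K
  set i := w / (2*K) with hi
  set r := w % (2*K) with hr
  have hi0 : 0 ≤ i := Int.ediv_nonneg (by linarith) (by linarith)
  rcases le_or_gt r 0 with hrle | hrpos
  · right
    exact PP_intro hK i hi0 (by linarith) (by linarith) (by linarith)
  · rcases le_or_gt r K with hrK | hrK
    · left
      exact PP_intro hK i hi0 (by linarith) (by linarith) (by linarith)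
    · right
      have hexp : 2*K*(i+1) = 2*K*i + 2*K := by ring
      exact PP_intro hK (i+1) (by linarith) (by linarith) (by linarith) (by linarith)

lemma pat_or (hK : 1 ≤ K) (hQ0 : 0 ≤ Q) {v : ℤ}
    (h1 : -(2*K*Q + K) ≤ v) (h2 : v + K ≤ 2*K*Q + K) :
    Pat K Q v ∨ Pat K Q (v + K) := by
  have hM0 : 0 ≤ 2*K*Q := mul_nonneg (by linarith) hQ0
  rcases lt_trichotomy v 0 with hv | rfl | hv
  · rcases le_or_gt (-K) v with hge | hlt
    · left
      right; right
      have hz : 2*K*(0:ℤ) = 0 := by ring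
      exact PP_intro hK 0 le_rfl (by linarith) (by linarith) (by linarith)
    · have hres := pat_or_pos (Q := Q) hK (w := -(v+K)) (by linarith) (by linarith)
      rcases hres with h | h
      · right; right; right; exact h
      · left; right; right
        have he : -(v+K)+K = -v := by ring
        rwa [he] at h
  · left; exact Or.inl rfl
  · have hres := pat_or_pos (Q := Q) hK (w := v) (by linarith) h2
    rcases hres with h | h
    · left; exact Or.inr (Or.inl h)
    · right; exact Or.inr (Or.inl h)

lemma core_small (q k : ℕ) (hq : 1 ≤ q) (hk : 2*q ≤ k) (t e₁ e₂ : ℤ)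
    (h1 : 1 ≤ e₁) (h2 : e₁ ≤ (k:ℤ)) (h3 : (k:ℤ)+1 ≤ e₁ + t) (h4 : e₁ + t ≤ 2*(k:ℤ))
    (h5 : 1 ≤ e₂) (h6 : e₂ ≤ (k:ℤ)) (h7 : (k:ℤ)+1 ≤ 2*(k:ℤ) + e₂ - t)
    (h8 : 2*(k:ℤ) + e₂ - t ≤ 2*(k:ℤ)) :
    ∃ W : Finset ℤ, 2*q ≤ W.card ∧ ∀ v ∈ W,
      Pat (k:ℤ) (q:ℤ) v ∧ |v| ≤ 2*(k:ℤ)*(q:ℤ) + k ∧ ¬ Pat (k:ℤ) (q:ℤ) (v + t) ∧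
      |v + t| ≤ 2*(k:ℤ)*(q:ℤ) + 3*(k:ℤ) + 2*(q:ℤ) - 2 := by
  have hK : (1:ℤ) ≤ (k:ℤ) := by exact_mod_cast (by omega : 1 ≤ k)
  have hQ : (1:ℤ) ≤ (q:ℤ) := by exact_mod_cast hq
  have hKQ : 2*(q:ℤ) ≤ (k:ℤ) := by exact_mod_cast hk
  set f₁ : ℕ → ℤ := fun i => 2*(k:ℤ)*(i:ℤ) + e₁ with hf₁
  set f₂ : ℕ → ℤ := fun i => -(2*(k:ℤ)*((i:ℤ)+1) + e₂) with hf₂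
  have hinj1 : Function.Injective f₁ := by
    intro a b hab
    simp only [hf₁] at hab
    have h' : 2*(k:ℤ)*(a:ℤ) = 2*(k:ℤ)*(b:ℤ) := by linarith
    have := mul_left_cancel₀ (show (2*(k:ℤ)) ≠ 0 by positivity) h'
    exact_mod_cast this
  have hinj2 : Function.Injective f₂ := by
    intro a b hab
    simp only [hf₂, neg_inj] at hab
    have h' : 2*(k:ℤ)*((a:ℤ)+1) = 2*(k:ℤ)*((b:ℤ)+1) := by linarith
    have := mul_left_cancel₀ (show (2*(k:ℤ)) ≠ 0 by positivity) h'
    have : (a:ℤ) = (b:ℤ) := by linarith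
    exact_mod_cast this
  refine ⟨(Finset.range (q+1)).image f₁ ∪ (Finset.range q).image f₂, ?_, ?_⟩
  · have hdisj : Disjoint ((Finset.range (q+1)).image f₁) ((Finset.range q).image f₂) := by
      simp only [Finset.disjoint_left, Finset.mem_image, Finset.mem_range]
      rintro v ⟨a, _, rfl⟩ ⟨b, _, hb⟩
      have hpa : 0 ≤ 2*(k:ℤ)*(a:ℤ) := by positivity
      have hpb : 0 ≤ 2*(k:ℤ)*((b:ℤ)+1) := by positivity
      simp only [hf₁, hf₂] at hb
      linarith
    rw [Finset.card_union_of_disjoint hdisj, Finset.card_image_of_injective _ hinj1,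
      Finset.card_image_of_injective _ hinj2, Finset.card_range, Finset.card_range]
    omega
  · intro v hv
    rcases Finset.mem_union.mp hv with hv | hv
    · obtain ⟨i, hi, rfl⟩ := Finset.mem_image.mp hv
      rw [Finset.mem_range] at hi
      have hiq : (i:ℤ) ≤ (q:ℤ) := by exact_mod_cast (by omega : i ≤ q)
      have hmono : 2*(k:ℤ)*(i:ℤ) ≤ 2*(k:ℤ)*(q:ℤ) :=
        mul_le_mul_of_nonneg_left hiq (by positivity)
      have hge : 0 ≤ 2*(k:ℤ)*(i:ℤ) := by positivity
      have hval : f₁ i = 2*(k:ℤ)*(i:ℤ) + e₁ := by simp only [hf₁]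
      refine ⟨Or.inr (Or.inl (PP_intro hK (i:ℤ) (by positivity)
        (by rw [hval]; linarith) (by rw [hval]; linarith) (by rw [hval]; linarith))), ?_, ?_, ?_⟩
      · rw [hval, abs_le]
        constructor <;> linarith
      · have hrw : f₁ i + t = 2*(k:ℤ)*(i:ℤ) + (e₁ + t) := by rw [hval]; ring
        rw [hrw]
        rintro (h0 | hP | hP)
        · linarith
        · exact not_PP_gap hK (i:ℤ) (e₁+t) (Or.inl ⟨h3, h4⟩) hP
        · have := PP_pos (by linarith) hP; linarith
      · rw [hval, abs_le]
        constructor <;> linarith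
    · obtain ⟨i, hi, rfl⟩ := Finset.mem_image.mp hv
      rw [Finset.mem_range] at hi
      have hiq : (i:ℤ)+1 ≤ (q:ℤ) := by
        have : i + 1 ≤ q := by omega
        exact_mod_cast this
      have hmono : 2*(k:ℤ)*((i:ℤ)+1) ≤ 2*(k:ℤ)*(q:ℤ) :=
        mul_le_mul_of_nonneg_left hiq (by positivity)
      have hge : 0 ≤ 2*(k:ℤ)*((i:ℤ)+1) := by positivity
      have hge' : 0 ≤ 2*(k:ℤ)*(i:ℤ) := by positivity
      have hexp : 2*(k:ℤ)*((i:ℤ)+1) = 2*(k:ℤ)*(i:ℤ) + 2*(k:ℤ) := by ring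
      have hval : f₂ i = -(2*(k:ℤ)*((i:ℤ)+1) + e₂) := by simp only [hf₂]
      have hnval : -(f₂ i) = 2*(k:ℤ)*((i:ℤ)+1) + e₂ := by rw [hval]; ring
      refine ⟨Or.inr (Or.inr (by
          rw [hnval]
          exact PP_intro hK ((i:ℤ)+1) (by positivity) (by linarith) (by linarith) (by linarith))),
        ?_, ?_, ?_⟩
      · rw [hval, abs_le]
        constructor <;> [linarith; linarith]
      · have hrw : f₂ i + t = -(2*(k:ℤ)*(i:ℤ) + (2*(k:ℤ) + e₂ - t)) := by rw [hval]; ring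
        rw [hrw]
        rintro (h0 | hP | hP)
        · have : 2*(k:ℤ)*(i:ℤ) + (2*(k:ℤ) + e₂ - t) = 0 := by linarith
          linarith
        · have := PP_pos (by linarith) hP
          linarith
        · rw [neg_neg] at hP
          exact not_PP_gap hK (i:ℤ) (2*(k:ℤ) + e₂ - t) (Or.inl ⟨h7, h8⟩) hP
      · have hrw : f₂ i + t = -(2*(k:ℤ)*(i:ℤ) + (2*(k:ℤ) + e₂ - t)) := by rw [hval]; ring
        rw [hrw, abs_le]
        constructor <;> [linarith; linarith]

lemma core_big (q k : ℕ) (hq : 1 ≤ q) (hk : 2*q ≤ k) (N t : ℤ)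
    (hN : N = 4*((q:ℤ)+1)*(k:ℤ) + 2*(q:ℤ) - 1)
    (ht1 : 2*(k:ℤ) ≤ t) (ht2 : t ≤ N - 2*(k:ℤ)) :
    ∃ W : Finset ℤ, 2*q ≤ W.card ∧ ∀ v ∈ W,
      Pat (k:ℤ) (q:ℤ) v ∧ |v| ≤ 2*(k:ℤ)*(q:ℤ) + k ∧ ¬ Pat (k:ℤ) (q:ℤ) (v + t) ∧
      |v + t| ≤ 2*(k:ℤ)*(q:ℤ) + 3*(k:ℤ) + 2*(q:ℤ) - 2 := by
  classical
  have hK : (1:ℤ) ≤ (k:ℤ) := by exact_mod_cast (by omega : 1 ≤ k)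
  have hQ : (1:ℤ) ≤ (q:ℤ) := by exact_mod_cast hq
  have hKQ : 2*(q:ℤ) ≤ (k:ℤ) := by exact_mod_cast hk
  have h2kM : 2*(k:ℤ)*1 ≤ 2*(k:ℤ)*(q:ℤ) := mul_le_mul_of_nonneg_left hQ (by positivity)
  have hM0 : 0 ≤ 2*(k:ℤ)*(q:ℤ) := by positivity
  set M : ℤ := 2*(k:ℤ)*(q:ℤ) + k with hM
  have hNM : N - M - 1 = M + 2*(k:ℤ) + 2*(q:ℤ) - 2 := by rw [hN, hM]; ring
  set a : ℤ := max (M + 1 - t) (-M) with ha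
  have haM : -M ≤ a := le_max_right _ _
  have haU : a ≤ M + 1 - 2*(k:ℤ) := by
    apply max_le
    · linarith
    · linarith
  have hat : M + 1 ≤ a + t := by
    rcases le_or_gt (-M) (M+1-t) with h | h
    · have haa : a = M + 1 - t := by rw [ha]; exact max_eq_left h
      linarith
    · have haa : a = -M := by rw [ha]; exact max_eq_right (by linarith)
      rw [haa]; linarith
  set f : ℕ → ℤ := fun s => if Pat (k:ℤ) (q:ℤ) (a + (s:ℤ)) then a + (s:ℤ) else a + (s:ℤ) + k
    with hf
  refine ⟨(Finset.range (2*q)).image f, ?_, ?_⟩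
  · rw [Finset.card_image_of_injOn]
    · rw [Finset.card_range]
    · intro s hs s' hs' hss
      simp only [Finset.coe_range, Set.mem_Iio] at hs hs'
      simp only [hf] at hss
      split_ifs at hss <;> omega
  · intro v hv
    obtain ⟨s, hs, rfl⟩ := Finset.mem_image.mp hv
    rw [Finset.mem_range] at hs
    have hs2q : (s:ℤ) ≤ 2*(q:ℤ) - 1 := by
      have : (s:ℤ) + 1 ≤ 2*(q:ℤ) := by exact_mod_cast (by omega : s + 1 ≤ 2*q)
      linarith
    have hs0 : 0 ≤ (s:ℤ) := by positivity
    have hvt_ub : a + (s:ℤ) + (k:ℤ) + t ≤ N - M - 1 := by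
      rcases le_or_gt (-M) (M+1-t) with h | h
      · have haa : a = M + 1 - t := by rw [ha]; exact max_eq_left h
        rw [haa]; linarith
      · have haa : a = -M := by rw [ha]; exact max_eq_right (by linarith)
        rw [haa]; linarith
    have hcases : f s = a + (s:ℤ) ∧ Pat (k:ℤ) (q:ℤ) (a + (s:ℤ)) ∨
        f s = a + (s:ℤ) + k ∧ Pat (k:ℤ) (q:ℤ) (a + (s:ℤ) + k) := by
      simp only [hf]
      split_ifs with hP
      · exact Or.inl ⟨rfl, hP⟩
      · refine Or.inr ⟨rfl, ?_⟩
        rcases pat_or (K := (k:ℤ)) (Q := (q:ℤ)) hK (by linarith) (v := a + (s:ℤ)) (by linarith)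
          (by linarith) with h | h
        · exact absurd h hP
        · exact h
    rcases hcases with ⟨hfv, hPv⟩ | ⟨hfv, hPv⟩ <;>
      refine ⟨by rw [hfv]; exact hPv, ?_, ?_, ?_⟩
    · rw [hfv, abs_le]; constructor <;> linarith
    · rw [hfv]
      exact not_Pat_big hK (by linarith) (by linarith)
    · rw [hfv, abs_le]
      constructor <;> linarith
    · rw [hfv, abs_le]; constructor <;> linarith
    · rw [hfv]
      exact not_Pat_big hK (by linarith) (by linarith)
    · rw [hfv, abs_le]
      constructor <;> linarith

lemma core (q k : ℕ) (hq : 1 ≤ q) (hk : 2*q ≤ k) (N t : ℤ)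
    (hN : N = 4*((q:ℤ)+1)*(k:ℤ) + 2*(q:ℤ) - 1)
    (ht1 : 1 ≤ t) (ht2 : t ≤ N - 2*(k:ℤ)) :
    ∃ W : Finset ℤ, 2*q ≤ W.card ∧ ∀ v ∈ W,
      Pat (k:ℤ) (q:ℤ) v ∧ |v| ≤ 2*(k:ℤ)*(q:ℤ) + k ∧ ¬ Pat (k:ℤ) (q:ℤ) (v + t) ∧
      |v + t| ≤ 2*(k:ℤ)*(q:ℤ) + 3*(k:ℤ) + 2*(q:ℤ) - 2 := by
  rcases le_or_gt t (2*(k:ℤ) - 1) with hsm | hbig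
  · refine core_small q k hq hk t (if t ≤ (k:ℤ) then (k:ℤ) else 2*(k:ℤ) - t)
      (if t ≤ (k:ℤ) then 1 else t - (k:ℤ) + 1) ?_ ?_ ?_ ?_ ?_ ?_ ?_ ?_ <;>
      split_ifs <;> omega
  · exact core_big q k hq hk N t hN (by linarith) ht2


end Stmt17Aux

set_option maxHeartbeats 4000000 in
/- **Statement 17.** Let `q ≥ 1`, `k ≥ 2q`, `d = 2(q+1)k`, `n = 2d + 2q - 1`, and let
`G = G_{q,k}` be the circulant graph on `ℤ/nℤ` with jump set
`U = ⋃_{i=0}^{q} {2ik + 1, …, 2ik + k}` (so `x ~ y` iff `y - x ∈ U ∪ (-U)`).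
Then `G` is `d`-regular, any two distinct vertices satisfy `|N[x] ∪ N[y]| ≥ d + 2q + 1`,
`G` has no `(2, d-1)`-bipartite-hole, and `ᾱ(G) ≤ d`. -/
open Stmt17Aux in
/-- Let `q ≥ 1`, `k ≥ 2q`, `d = 2(q+1)k`, `n = 2d + 2q - 1`, and let
`G = G_{q,k}` be the circulant graph on `ℤ/nℤ` with jump set
`U = ⋃_{i=0}^{q} {2ik + 1, …, 2ik + k}` (so `x ~ y` iff `y - x ∈ U ∪ (-U)`).
Then `G` is `d`-regular, any two distinct vertices satisfy `|N[x] ∪ N[y]| ≥ d + 2q + 1`,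
`G` has no `(2, d-1)`-bipartite-hole, and `ᾱ(G) ≤ d`. -/
theorem stmt17 (q k d n : ℕ) (hq : 1 ≤ q) (hk : 2 * q ≤ k)
    (hd : d = 2 * (q + 1) * k) (hn : n = 2 * d + 2 * q - 1)
    (U : Set (ZMod n))
    (hU : U = {z : ZMod n | ∃ i j : ℕ, i ≤ q ∧ 1 ≤ j ∧ j ≤ k ∧
      z = ((2 * i * k + j : ℕ) : ZMod n)})
    (G : SimpleGraph (ZMod n)) (hG : G = SimpleGraph.circulantGraph U) :
    (∀ v : ZMod n, (G.neighborSet v).ncard = d) ∧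
    (∀ x y : ZMod n, x ≠ y →
      (d + 2 * q + 1 : ℕ) ≤ (insert x (G.neighborSet x) ∪ insert y (G.neighborSet y)).ncard) ∧
    ¬ G.HasBipHole 2 (d - 1) ∧
    G.bipHoleNum ≤ d := by
  classical
  have hk2 : 2 ≤ k := by omega
  have hd8 : 8 ≤ d := by
    have h1 : 2*2*2 ≤ 2*(q+1)*k :=
      Nat.mul_le_mul (Nat.mul_le_mul (le_refl 2) (by omega)) (by omega)
    omega
  have hn1 : 1 ≤ n := by omega
  haveI : NeZero n := ⟨by omega⟩
  have hK : (1:ℤ) ≤ (k:ℤ) := by exact_mod_cast (show 1 ≤ k by omega)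
  have hQ : (1:ℤ) ≤ (q:ℤ) := by exact_mod_cast hq
  have hKQ : 2*(q:ℤ) ≤ (k:ℤ) := by exact_mod_cast hk
  have hdZ : (d:ℤ) = 2*((q:ℤ)+1)*(k:ℤ) := by
    rw [hd]; push_cast; ring
  have hN : (n:ℤ) = 4*((q:ℤ)+1)*(k:ℤ) + 2*(q:ℤ) - 1 := by
    have hn' : n + 1 = 2*d + 2*q := by omega
    have hcast : (n:ℤ) + 1 = 2*(d:ℤ) + 2*(q:ℤ) := by exact_mod_cast hn'
    rw [hdZ] at hcast; linarith
  have hM0 : (0:ℤ) ≤ 2*(k:ℤ)*(q:ℤ) := by positivity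
  have h2kM : 2*(k:ℤ)*1 ≤ 2*(k:ℤ)*(q:ℤ) := mul_le_mul_of_nonneg_left hQ (by positivity)
  have hNMeq : (n:ℤ) - (2*(k:ℤ)*(q:ℤ) + k) - 1
      = 2*(k:ℤ)*(q:ℤ) + 3*(k:ℤ) + 2*(q:ℤ) - 2 := by rw [hN]; ring
  have hMle : (2*(k:ℤ)*(q:ℤ) + k) ≤ (n:ℤ) - (2*(k:ℤ)*(q:ℤ) + k) - 1 := by
    rw [hNMeq]; linarith
  -- cast injectivity within an n-window
  have castinj : ∀ a b : ℤ, |a - b| < (n:ℤ) → ((a:ZMod n) = (b:ZMod n)) → a = b := by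
    intro a b hab h
    have h0 : ((a - b : ℤ) : ZMod n) = 0 := by push_cast; rw [h]; ring
    have hdvd : ((n:ℕ):ℤ) ∣ (a - b) := (ZMod.intCast_zmod_eq_zero_iff_dvd _ n).mp h0
    have := Int.eq_zero_of_abs_lt_dvd hdvd hab
    linarith
  -- membership of integer casts in U
  have hUmem : ∀ v : ℤ, |v| ≤ (n:ℤ) - (2*(k:ℤ)*(q:ℤ) + k) - 1 →
      (((v:ℤ) : ZMod n) ∈ U ↔ PP (k:ℤ) (q:ℤ) v) := by
    intro v hv
    have hvabs := abs_le.mp hv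
    rw [hU]
    simp only [Set.mem_setOf_eq]
    constructor
    · rintro ⟨i, j, hiq, hj1, hjk, hz⟩
      have hiZ : (i:ℤ) ≤ (q:ℤ) := by exact_mod_cast hiq
      have hj1' : (1:ℤ) ≤ (j:ℤ) := by exact_mod_cast hj1
      have hjk' : (j:ℤ) ≤ (k:ℤ) := by exact_mod_cast hjk
      have hik : (i:ℤ)*(k:ℤ) ≤ (q:ℤ)*(k:ℤ) := mul_le_mul_of_nonneg_right hiZ (by positivity)
      have hik0 : (0:ℤ) ≤ (i:ℤ)*(k:ℤ) := by positivity
      have he1 : 2*(k:ℤ)*(q:ℤ) = 2*((q:ℤ)*(k:ℤ)) := by ring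
      have hwlo : (1:ℤ) ≤ 2*(i:ℤ)*(k:ℤ) + (j:ℤ) := by nlinarith
      have hwhi : 2*(i:ℤ)*(k:ℤ) + (j:ℤ) ≤ 2*(k:ℤ)*(q:ℤ) + k := by nlinarith
      have hveq : v = 2*(i:ℤ)*(k:ℤ) + (j:ℤ) := by
        apply castinj
        · rw [abs_lt]
          constructor <;> linarith
        · rw [hz]; push_cast; ring
      have hcomm : 2*(k:ℤ)*(i:ℤ) = 2*(i:ℤ)*(k:ℤ) := by ring
      refine PP_intro (Q := (q:ℤ)) hK (i:ℤ) (by positivity) ?_ ?_ ?_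
      · rw [hveq]; linarith
      · rw [hveq]; linarith
      · rw [hveq]; linarith
    · rintro ⟨i, hi0, hiQ, hlo, hhi⟩
      have hi' : ((i.toNat : ℕ) : ℤ) = i := Int.toNat_of_nonneg hi0
      have hj' : (((v - 2*(k:ℤ)*i).toNat : ℕ) : ℤ) = v - 2*(k:ℤ)*i :=
        Int.toNat_of_nonneg (by linarith)
      refine ⟨i.toNat, (v - 2*(k:ℤ)*i).toNat, ?_, ?_, ?_, ?_⟩
      · omega
      · have h1' : (1:ℤ) ≤ (((v - 2*(k:ℤ)*i).toNat : ℕ) : ℤ) := by rw [hj']; linarith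
        exact_mod_cast h1'
      · have h2' : (((v - 2*(k:ℤ)*i).toNat : ℕ) : ℤ) ≤ (k:ℤ) := by rw [hj']; linarith
        exact_mod_cast h2'
      · have heq : ((2 * i.toNat * k + (v - 2*(k:ℤ)*i).toNat : ℕ) : ℤ) = v := by
          push_cast [hi', hj']; ring
        calc ((v:ℤ) : ZMod n)
            = (((2 * i.toNat * k + (v - 2*(k:ℤ)*i).toNat : ℕ) : ℤ) : ZMod n) := by rw [heq]
          _ = ((2 * i.toNat * k + (v - 2*(k:ℤ)*i).toNat : ℕ) : ZMod n) := by push_cast; ring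
  set S : Set (ZMod n) := {z | z = 0 ∨ z ∈ U ∨ -z ∈ U} with hSdef
  have hSmem : ∀ v : ℤ, |v| ≤ (n:ℤ) - (2*(k:ℤ)*(q:ℤ) + k) - 1 →
      (((v:ℤ):ZMod n) ∈ S ↔ Pat (k:ℤ) (q:ℤ) v) := by
    intro v hv
    have hz : (((v:ℤ):ZMod n) = 0 ↔ v = 0) := by
      constructor
      · intro h
        refine castinj v 0 ?_ (by simpa using h)
        rw [sub_zero]
        calc |v| ≤ _ := hv
          _ < (n:ℤ) := by linarith
      · rintro rfl; simp
    have hnegcast : -((v:ℤ):ZMod n) = (((-v : ℤ)):ZMod n) := by push_cast; ring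
    rw [hSdef]
    simp only [Set.mem_setOf_eq]
    rw [hz, hUmem v hv, hnegcast, hUmem (-v) (by rwa [abs_neg])]
    exact Iff.rfl
  have hSneg : ∀ z : ZMod n, z ∈ S → -z ∈ S := by
    rintro z (h | h | h)
    · left; simp [h]
    · right; right; rwa [neg_neg]
    · right; left; exact h
  have h0U : (0 : ZMod n) ∉ U := by
    intro h0
    have hb : |(0:ℤ)| ≤ (n:ℤ) - (2*(k:ℤ)*(q:ℤ) + k) - 1 := by
      rw [abs_zero, hNMeq]; linarith
    have := (hUmem 0 hb).mp (by simpa using h0)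
    have := PP_pos (by linarith) this
    linarith
  have hAdj : ∀ x z : ZMod n, G.Adj x z ↔ (x ≠ z ∧ ((x - z) ∈ U ∨ (z - x) ∈ U)) := by
    intro x z
    rw [hG]
    exact SimpleGraph.fromRel_adj _ x z
  have hNcl : ∀ x z : ZMod n, (z ∈ insert x (G.neighborSet x)) ↔ (z - x) ∈ S := by
    intro x z
    simp only [Set.mem_insert_iff, SimpleGraph.mem_neighborSet, hAdj]
    rw [hSdef]
    simp only [Set.mem_setOf_eq]
    constructor
    · rintro (rfl | ⟨hne, h | h⟩)
      · left; simp
      · right; right; rw [neg_sub]; exact h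
      · right; left; exact h
    · rintro (h | h | h)
      · left; exact sub_eq_zero.mp h
      · refine Or.inr ⟨?_, Or.inr h⟩
        rintro rfl
        rw [sub_self] at h
        exact h0U h
      · refine Or.inr ⟨?_, Or.inl (by rwa [neg_sub] at h)⟩
        rintro rfl
        rw [sub_self, neg_zero] at h
        exact h0U h
  have hNS : ∀ x : ZMod n, insert x (G.neighborSet x) = (fun w => x + w) '' S := by
    intro x
    ext z
    rw [hNcl]
    constructor
    · intro h; exact ⟨z - x, h, by ring⟩
    · rintro ⟨w, hw, rfl⟩; simpa using hw
  -- counting S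
  set Ipr : Finset (ℕ × ℕ) := Finset.range (q+1) ×ˢ Finset.Icc 1 k with hIpr
  set gZ : ℕ × ℕ → ℤ := fun p => 2*(p.1:ℤ)*(k:ℤ) + (p.2:ℤ) with hgZ
  set posF : Finset ℤ := Ipr.image gZ with hposF
  set negF : Finset ℤ := posF.image (fun v => -v) with hnegF
  set FS : Finset ℤ := insert 0 (posF ∪ negF) with hFS
  have hpos1 : ∀ v ∈ posF, 1 ≤ v ∧ v ≤ 2*(k:ℤ)*(q:ℤ) + k := by
    intro v hv
    rw [hposF] at hv
    obtain ⟨p, hp, rfl⟩ := Finset.mem_image.mp hv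
    rw [hIpr, Finset.mem_product, Finset.mem_range, Finset.mem_Icc] at hp
    have hi : (p.1:ℤ) ≤ (q:ℤ) := by exact_mod_cast (by omega : p.1 ≤ q)
    have hj1 : (1:ℤ) ≤ (p.2:ℤ) := by exact_mod_cast hp.2.1
    have hj2 : (p.2:ℤ) ≤ (k:ℤ) := by exact_mod_cast hp.2.2
    have hik : (p.1:ℤ)*(k:ℤ) ≤ (q:ℤ)*(k:ℤ) := mul_le_mul_of_nonneg_right hi (by positivity)
    have hik0 : (0:ℤ) ≤ (p.1:ℤ)*(k:ℤ) := by positivity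
    simp only [hgZ]
    constructor
    · nlinarith
    · nlinarith
  have hgInj : Set.InjOn gZ ↑Ipr := by
    intro p hp p' hp' heq
    rw [Finset.mem_coe, hIpr, Finset.mem_product, Finset.mem_range, Finset.mem_Icc] at hp hp'
    simp only [hgZ] at heq
    have hj1 : (1:ℤ) ≤ (p.2:ℤ) := by exact_mod_cast hp.2.1
    have hj2 : (p.2:ℤ) ≤ (k:ℤ) := by exact_mod_cast hp.2.2
    have hj1' : (1:ℤ) ≤ (p'.2:ℤ) := by exact_mod_cast hp'.2.1
    have hj2' : (p'.2:ℤ) ≤ (k:ℤ) := by exact_mod_cast hp'.2.2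
    have hii : p.1 = p'.1 := by
      by_contra hne
      rcases Nat.lt_or_ge p.1 p'.1 with hlt | hge
      · have h1 : (p.1:ℤ) + 1 ≤ (p'.1:ℤ) := by exact_mod_cast hlt
        have h2 : (2*((p.1:ℤ)+1))*(k:ℤ) ≤ (2*(p'.1:ℤ))*(k:ℤ) :=
          mul_le_mul_of_nonneg_right (by linarith) (by positivity)
        have hexp : (2*((p.1:ℤ)+1))*(k:ℤ) = 2*(p.1:ℤ)*(k:ℤ) + 2*(k:ℤ) := by ring
        have hexp2 : (2*(p'.1:ℤ))*(k:ℤ) = 2*(p'.1:ℤ)*(k:ℤ) := by ring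
        linarith
      · have hlt : p'.1 < p.1 := by omega
        have h1 : (p'.1:ℤ) + 1 ≤ (p.1:ℤ) := by exact_mod_cast hlt
        have h2 : (2*((p'.1:ℤ)+1))*(k:ℤ) ≤ (2*(p.1:ℤ))*(k:ℤ) :=
          mul_le_mul_of_nonneg_right (by linarith) (by positivity)
        have hexp : (2*((p'.1:ℤ)+1))*(k:ℤ) = 2*(p'.1:ℤ)*(k:ℤ) + 2*(k:ℤ) := by ring
        have hexp2 : (2*(p.1:ℤ))*(k:ℤ) = 2*(p.1:ℤ)*(k:ℤ) := by ring
        linarith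
    have hjj : p.2 = p'.2 := by
      have hks : (p.2:ℤ) = (p'.2:ℤ) := by
        rw [hii] at heq; linarith
      exact_mod_cast hks
    exact Prod.ext hii hjj
  have hposCard : posF.card = (q+1)*k := by
    rw [hposF, Finset.card_image_of_injOn hgInj, hIpr, Finset.card_product, Finset.card_range,
      Nat.card_Icc]
    simp
  have hnegCard : negF.card = (q+1)*k := by
    rw [hnegF, Finset.card_image_of_injective _ neg_injective, hposCard]
  have hdisjPN : Disjoint posF negF := by
    rw [Finset.disjoint_left]
    intro v hvp hvn
    rw [hnegF] at hvn
    obtain ⟨w, hw, hwv⟩ := Finset.mem_image.mp hvn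
    have h1 := (hpos1 v hvp).1
    have h2 := (hpos1 w hw).1
    rw [← hwv] at h1
    linarith
  have h0PN : (0:ℤ) ∉ posF ∪ negF := by
    intro h
    rcases Finset.mem_union.mp h with h | h
    · have := (hpos1 0 h).1; linarith
    · rw [hnegF] at h
      obtain ⟨w, hw, hwv⟩ := Finset.mem_image.mp h
      have := (hpos1 w hw).1
      have : w = 0 := by linarith [neg_eq_zero.mp hwv]
      linarith
  have hFScard : FS.card = d + 1 := by
    rw [hFS, Finset.card_insert_of_notMem h0PN, Finset.card_union_of_disjoint hdisjPN,
      hposCard, hnegCard]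
    have : d = 2*((q+1)*k) := by rw [hd]; ring
    omega
  have hFSb : ∀ v ∈ FS, |v| ≤ 2*(k:ℤ)*(q:ℤ) + k := by
    intro v hv
    rw [hFS] at hv
    rcases Finset.mem_insert.mp hv with rfl | hv
    · rw [abs_zero]; linarith
    · rcases Finset.mem_union.mp hv with h | h
      · obtain ⟨h1, h2⟩ := hpos1 v h
        rw [abs_le]; constructor <;> linarith
      · rw [hnegF] at h
        obtain ⟨w, hw, hwv⟩ := Finset.mem_image.mp h
        obtain ⟨h1, h2⟩ := hpos1 w hw
        rw [← hwv, abs_le]; constructor <;> linarith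
  have hFSS : S = (fun v : ℤ => ((v : ZMod n))) '' ↑FS := by
    ext z
    constructor
    · intro hz
      rw [hSdef] at hz
      rcases hz with rfl | hz | hz
      · exact ⟨0, by rw [hFS]; exact Finset.mem_coe.mpr (Finset.mem_insert_self _ _), by simp⟩
      · rw [hU] at hz
        obtain ⟨i, j, hiq, hj1, hjk, hzeq⟩ := hz
        refine ⟨2*(i:ℤ)*(k:ℤ) + (j:ℤ), ?_, ?_⟩
        · rw [hFS]
          apply Finset.mem_coe.mpr
          apply Finset.mem_insert_of_mem
          apply Finset.mem_union_left
          rw [hposF]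
          apply Finset.mem_image.mpr
          refine ⟨(i, j), ?_, by simp only [hgZ]⟩
          rw [hIpr, Finset.mem_product, Finset.mem_range, Finset.mem_Icc]
          exact ⟨by omega, hj1, hjk⟩
        · rw [hzeq]; push_cast; ring
      · rw [hU] at hz
        obtain ⟨i, j, hiq, hj1, hjk, hzeq⟩ := hz
        refine ⟨-(2*(i:ℤ)*(k:ℤ) + (j:ℤ)), ?_, ?_⟩
        · rw [hFS]
          apply Finset.mem_coe.mpr
          apply Finset.mem_insert_of_mem
          apply Finset.mem_union_right
          rw [hnegF]
          apply Finset.mem_image.mpr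
          refine ⟨2*(i:ℤ)*(k:ℤ) + (j:ℤ), ?_, rfl⟩
          rw [hposF]
          apply Finset.mem_image.mpr
          refine ⟨(i, j), ?_, by simp only [hgZ]⟩
          rw [hIpr, Finset.mem_product, Finset.mem_range, Finset.mem_Icc]
          exact ⟨by omega, hj1, hjk⟩
        · have : z = -((2 * i * k + j : ℕ) : ZMod n) := by
            rw [← hzeq, neg_neg]
          rw [this]; push_cast; ring
    · rintro ⟨v, hv, rfl⟩
      rw [Finset.mem_coe, hFS] at hv
      rw [hSdef]
      rcases Finset.mem_insert.mp hv with rfl | hv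
      · left; simp
      · rcases Finset.mem_union.mp hv with h | h
        · right; left
          rw [hposF] at h
          obtain ⟨p, hp, rfl⟩ := Finset.mem_image.mp h
          rw [hIpr, Finset.mem_product, Finset.mem_range, Finset.mem_Icc] at hp
          rw [hU]
          refine ⟨p.1, p.2, by omega, hp.2.1, hp.2.2, ?_⟩
          simp only [hgZ]; push_cast; ring
        · right; right
          rw [hnegF] at h
          obtain ⟨w, hw, hwv⟩ := Finset.mem_image.mp h
          rw [hposF] at hw
          obtain ⟨p, hp, rfl⟩ := Finset.mem_image.mp hw
          rw [hIpr, Finset.mem_product, Finset.mem_range, Finset.mem_Icc] at hp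
          rw [hU]
          refine ⟨p.1, p.2, by omega, hp.2.1, hp.2.2, ?_⟩
          rw [← hwv, hgZ]; push_cast; ring
  have hcastInjFS : Set.InjOn (fun v : ℤ => ((v : ZMod n))) ↑FS := by
    intro a ha b hb hab
    have hba := abs_le.mp (hFSb a (Finset.mem_coe.mp ha))
    have hbb := abs_le.mp (hFSb b (Finset.mem_coe.mp hb))
    refine castinj a b ?_ hab
    rw [abs_lt]
    constructor <;> linarith
  have hcardS : S.ncard = d + 1 := by
    rw [hFSS, Set.ncard_image_of_injOn hcastInjFS, Set.ncard_coe_finset, hFScard]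
  have hNclcard : ∀ x : ZMod n, (insert x (G.neighborSet x)).ncard = d + 1 := by
    intro x
    rw [hNS x, Set.ncard_image_of_injective _ (add_right_injective x)]
    exact hcardS
  have part1 : ∀ v : ZMod n, (G.neighborSet v).ncard = d := by
    intro v
    have hnm : v ∉ G.neighborSet v := fun h => G.irrefl h
    have h1 := hNclcard v
    rw [Set.ncard_insert_of_notMem hnm (Set.toFinite _)] at h1
    omega
  -- the witness lemma
  have witness : ∀ c : ZMod n, c ≠ 0 → ∃ Wz : Finset (ZMod n), 2*q ≤ Wz.card ∧
      ∀ z ∈ Wz, z ∈ S ∧ z + c ∉ S := by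
    intro c hc
    have hval := ZMod.val_lt c
    have hvne : c.val ≠ 0 := fun h => hc ((ZMod.val_eq_zero c).mp h)
    set t : ℤ := (c.val : ℤ) with htdef
    have htc : ((t:ℤ) : ZMod n) = c := by
      rw [htdef]; push_cast
      exact ZMod.natCast_rightInverse c
    have ht1 : 1 ≤ t := by omega
    have ht2 : t ≤ (n:ℤ) - 1 := by omega
    have hkq0 : (0:ℤ) ≤ (k:ℤ)*(q:ℤ) := by positivity
    have h4k : 4*(k:ℤ) - 1 ≤ (n:ℤ) := by
      have hexp : 4*((q:ℤ)+1)*(k:ℤ) = 4*((k:ℤ)*(q:ℤ)) + 4*(k:ℤ) := by ring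
      rw [hN, hexp]; linarith
    rcases le_or_gt t ((n:ℤ) - 2*(k:ℤ)) with hcase | hcase
    · obtain ⟨W, hWc, hWm⟩ := core q k hq hk (n:ℤ) t hN ht1 hcase
      refine ⟨W.image (fun v : ℤ => ((v : ZMod n))), ?_, ?_⟩
      · rw [Finset.card_image_of_injOn]
        · exact hWc
        · intro x hx y hy hxy
          obtain ⟨_, hbx, _, _⟩ := hWm x (Finset.mem_coe.mp hx)
          obtain ⟨_, hby, _, _⟩ := hWm y (Finset.mem_coe.mp hy)
          have hbx' := abs_le.mp hbx
          have hby' := abs_le.mp hby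
          refine castinj x y ?_ hxy
          rw [abs_lt]
          constructor <;> linarith
      · intro z hz
        obtain ⟨v, hvW, rfl⟩ := Finset.mem_image.mp hz
        obtain ⟨hp, hb, hnp, hbt⟩ := hWm v hvW
        have hb1 : |v| ≤ (n:ℤ) - (2*(k:ℤ)*(q:ℤ)+k) - 1 := le_trans hb hMle
        refine ⟨(hSmem v hb1).mpr hp, ?_⟩
        have hcst : ((v:ℤ):ZMod n) + c = (((v + t : ℤ)) : ZMod n) := by
          rw [← htc]; push_cast; ring
        rw [hcst]
        intro hmem
        exact hnp ((hSmem (v+t) (by rw [hNMeq]; exact hbt)).mp hmem)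
    · set t' : ℤ := (n:ℤ) - t with ht'def
      have ht'1 : 1 ≤ t' := by rw [ht'def]; linarith
      have ht'2 : t' ≤ (n:ℤ) - 2*(k:ℤ) := by rw [ht'def]; linarith
      obtain ⟨W, hWc, hWm⟩ := core q k hq hk (n:ℤ) t' hN ht'1 ht'2
      refine ⟨W.image (fun v : ℤ => (((-v : ℤ)) : ZMod n)), ?_, ?_⟩
      · rw [Finset.card_image_of_injOn]
        · exact hWc
        · intro x hx y hy hxy
          obtain ⟨_, hbx, _, _⟩ := hWm x (Finset.mem_coe.mp hx)
          obtain ⟨_, hby, _, _⟩ := hWm y (Finset.mem_coe.mp hy)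
          have hbx' := abs_le.mp hbx
          have hby' := abs_le.mp hby
          have := castinj (-x) (-y) (by rw [abs_lt]; constructor <;> linarith) hxy
          linarith
      · intro z hz
        obtain ⟨v, hvW, rfl⟩ := Finset.mem_image.mp hz
        obtain ⟨hp, hb, hnp, hbt⟩ := hWm v hvW
        have hb1 : |v| ≤ (n:ℤ) - (2*(k:ℤ)*(q:ℤ)+k) - 1 := le_trans hb hMle
        constructor
        · have h1 : ((v:ℤ):ZMod n) ∈ S := (hSmem v hb1).mpr hp
          have hneg : (((-v:ℤ)):ZMod n) = -((v:ℤ):ZMod n) := by push_cast; ring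
          rw [hneg]
          exact hSneg _ h1
        · have hn0 : (((n:ℤ)) : ZMod n) = (0:ZMod n) := by
            exact_mod_cast ZMod.natCast_self n
          have hcalc : (((-v:ℤ)):ZMod n) + c = -(((v + t' : ℤ)) : ZMod n) := by
            rw [← htc]
            have hexpand : -(((v + t' : ℤ)) : ZMod n)
                = -(((v:ℤ)):ZMod n) - (((n:ℤ)):ZMod n) + (((t:ℤ)):ZMod n) := by
              rw [ht'def]; push_cast; ring
            rw [hexpand, hn0]
            push_cast; ring
          rw [hcalc]
          intro hmem
          have h2 := hSneg _ hmem
          rw [neg_neg] at h2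
          exact hnp ((hSmem (v + t') (by rw [hNMeq]; exact hbt)).mp h2)
  -- part 2
  have part2 : ∀ x y : ZMod n, x ≠ y →
      (d + 2 * q + 1 : ℕ) ≤ (insert x (G.neighborSet x) ∪ insert y (G.neighborSet y)).ncard := by
    intro x y hxy
    have hc : y - x ≠ 0 := sub_ne_zero.mpr (Ne.symm hxy)
    obtain ⟨Wz, hWc, hWm⟩ := witness (y - x) hc
    have hsub : (fun z => y + z) '' (↑Wz : Set (ZMod n)) ⊆
        (insert y (G.neighborSet y)) \ (insert x (G.neighborSet x)) := by
      rintro u ⟨z, hz, rfl⟩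
      obtain ⟨hzS, hzc⟩ := hWm z (Finset.mem_coe.mp hz)
      constructor
      · rw [hNcl]
        have he : y + z - y = z := by ring
        rw [he]
        exact hzS
      · rw [hNcl]
        have he : y + z - x = z + (y - x) := by ring
        rw [he]
        exact hzc
    have hcard : ((insert x (G.neighborSet x)) ∪ (insert y (G.neighborSet y))).ncard
        = (insert x (G.neighborSet x)).ncard
          + ((insert y (G.neighborSet y)) \ (insert x (G.neighborSet x))).ncard := by
      rw [← Set.union_diff_self]
      exact Set.ncard_union_eq disjoint_sdiff_self_right (Set.toFinite _) (Set.toFinite _)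
    have h2q : 2*q ≤ ((insert y (G.neighborSet y)) \ (insert x (G.neighborSet x))).ncard := by
      calc 2*q ≤ Wz.card := hWc
        _ = ((fun z => y + z) '' (↑Wz : Set (ZMod n))).ncard := by
            rw [Set.ncard_image_of_injective _ (add_right_injective y), Set.ncard_coe_finset]
        _ ≤ _ := Set.ncard_le_ncard hsub (Set.toFinite _)
    have hA := hNclcard x
    omega
  -- part 3
  have part3 : ¬ G.HasBipHole 2 (d-1) := by
    rintro ⟨P, T, hdisj, hP2, hT, hno⟩
    obtain ⟨a, b, hab, rfl⟩ := Finset.card_eq_two.mp hP2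
    have h2 := part2 a b hab
    have hTsub : (↑T : Set (ZMod n)) ⊆
        ((insert a (G.neighborSet a)) ∪ (insert b (G.neighborSet b)))ᶜ := by
      intro v hv
      have hvT : v ∈ T := Finset.mem_coe.mp hv
      simp only [Set.mem_compl_iff, Set.mem_union, Set.mem_insert_iff,
        SimpleGraph.mem_neighborSet]
      push_neg
      refine ⟨⟨?_, ?_⟩, ?_, ?_⟩
      · intro h
        rw [h] at hvT
        exact Finset.disjoint_left.mp hdisj (by simp) hvT
      · intro h
        exact hno a (by simp) v hvT h
      · intro h
        rw [h] at hvT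
        exact Finset.disjoint_left.mp hdisj (by simp) hvT
      · intro h
        exact hno b (by simp) v hvT h
    have hsum := Set.ncard_add_ncard_compl
      ((insert a (G.neighborSet a)) ∪ (insert b (G.neighborSet b))) (Set.toFinite _)
      (Set.toFinite _)
    have hcardn : Nat.card (ZMod n) = n := Nat.card_zmod n
    have hTle : T.card ≤
        (((insert a (G.neighborSet a)) ∪ (insert b (G.neighborSet b)))ᶜ).ncard := by
      rw [← Set.ncard_coe_finset]
      exact Set.ncard_le_ncard hTsub (Set.toFinite _)
    omega
  refine ⟨part1, part2, part3, ?_⟩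
  apply Nat.sInf_le
  exact ⟨by omega, 2, d - 1, by omega, by omega, by omega, part3⟩
end
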